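/- arXiv:1810.06937 — 6 statements merged into one kernel-verified Lean document; each statement's English description precedes it below -/
import Mathlib

section
/- Let X ⊆ ℝ^d be a product of open intervals, let 𝒬 be an admissible covering of X, let T be a measurable kernel on (0,∞) × X × X satisfying (A₀′) and (A₁′), and let {ψ_Q}_{Q∈𝒬} be a partition of unity subordinate to 𝒬, i.e. each ψ_Q ∈ C¹(X) with 0 ≤ ψ_Q ≤ χ_{Q^*}, ‖∇ψ_Q‖_∞ ≤ C₃ d_Q⁻¹, and Σ_{Q∈𝒬} ψ_Q = 1 on X. Then there is a constant C such that sup_{y∈X} Σ_{Q∈𝒬} ∫_{Q^{**}} sup_{0<t≤d_Q²} T_t(x,y) |ψ_Q(x) − ψ_Q(y)| dx ≤ C. -/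
open MeasureTheory Set Metric Filter
open scoped ENNReal NNReal

noncomputable section

/-- `ℝ^d` with the Euclidean structure and the Lebesgue measure. -/
abbrev Rd (d : ℕ) := EuclideanSpace ℝ (Fin d)

/-- The cuboid `Q(z, r₁, …, r_d)`, always taken as a subset of `X`. -/
def cuboid {d : ℕ} (X : Set (Rd d)) (z : Rd d) (r : Fin d → ℝ) : Set (Rd d) :=
  {x ∈ X | ∀ i, |x i - z i| ≤ r i}

/-- The `k`-fold enlargement `Q^{*⋯*}` of the cuboid, with enlargement parameter `κ`
(`k = 1` is `Q^*`, `k = 2` is `Q^{**}`, `k = 3` is `Q^{***}`). -/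
def cuboidSt {d : ℕ} (X : Set (Rd d)) (z : Rd d) (r : Fin d → ℝ) (κ : ℝ) (k : ℕ) :
    Set (Rd d) :=
  cuboid X z fun i => κ ^ k * r i

/-- The classical heat kernel `H_t(x,y) = (4πt)^{-d/2} exp(-|x-y|²/(4t))` on `ℝ^d`. -/
def heatK (d : ℕ) (t : ℝ) (x y : Rd d) : ℝ :=
  (4 * Real.pi * t) ^ (-(d : ℝ) / 2) * Real.exp (-dist x y ^ 2 / (4 * t))

/-- An admissible covering of `X ⊆ ℝ^d` by (countably many) cuboids, with enlargement
parameter `κ`: the cuboids cover `X`, pairwise intersect in measure zero, are "almost cubes"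
(constant `C₁`), neighbours have comparable diameters (constant `C₂`), the triple enlargements
have bounded overlap (constant `C₃`), and triple enlargements intersect iff the cuboids do. -/
structure AdmissibleCovering (d : ℕ) (X : Set (Rd d)) (κ : ℝ) (ι : Type) where
  z : ι → Rd d
  r : ι → Fin d → ℝ
  r_pos : ∀ n i, 0 < r n i
  covers : X ⊆ ⋃ n, cuboid X (z n) (r n)
  ae_disjoint : ∀ m n, m ≠ n →
    volume (cuboid X (z m) (r m) ∩ cuboid X (z n) (r n)) = 0
  C₁ : ℝ
  C₁_pos : 0 < C₁
  ratio : ∀ n i j, r n i ≤ C₁ * r n j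
  C₂ : ℝ
  C₂_pos : 0 < C₂
  comparable : ∀ m n, (cuboid X (z m) (r m) ∩ cuboid X (z n) (r n)).Nonempty →
    diam (cuboid X (z n) (r n)) ≤ C₂ * diam (cuboid X (z m) (r m))
  C₃ : ℝ≥0∞
  C₃_lt_top : C₃ < ⊤
  finite_overlap : ∀ x : Rd d,
    (∑' n, (cuboidSt X (z n) (r n) κ 3).indicator (fun _ => (1 : ℝ≥0∞)) x) ≤ C₃
  neighbors : ∀ m n,
    ((cuboidSt X (z m) (r m) κ 3) ∩ (cuboidSt X (z n) (r n) κ 3)).Nonempty ↔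
      ((cuboid X (z m) (r m)) ∩ (cuboid X (z n) (r n))).Nonempty

/-- `cov.Q n k` is the `k`-fold enlargement of the `n`-th cuboid of the covering
(`k = 0` gives the cuboid `Q` itself). -/
def AdmissibleCovering.Q {d : ℕ} {X : Set (Rd d)} {κ : ℝ} {ι : Type}
    (cov : AdmissibleCovering d X κ ι) (n : ι) (k : ℕ) : Set (Rd d) :=
  cuboidSt X (cov.z n) (cov.r n) κ k

/-- A `𝒬`-atom: either a classical atom supported in a cube `K ⊆ Q^*` for some `Q ∈ 𝒬`,
or the normalised indicator `|Q|⁻¹ χ_Q` of some `Q ∈ 𝒬`. -/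
def IsQAtom {d : ℕ} {X : Set (Rd d)} {κ : ℝ} {ι : Type}
    (cov : AdmissibleCovering d X κ ι) (a : Rd d → ℂ) : Prop :=
  (∃ (n : ι) (w : Rd d) (ρ : ℝ), 0 < ρ ∧
      cuboid X w (fun _ => ρ) ⊆ cov.Q n 1 ∧
      (∀ x ∉ cuboid X w fun _ => ρ, a x = 0) ∧
      (∀ x, ‖a x‖ ≤ ((volume (cuboid X w fun _ => ρ)).toReal)⁻¹) ∧
      (∫ x, a x) = 0) ∨
  (∃ n : ι, a = (cov.Q n 0).indicator fun _ => (((volume (cov.Q n 0)).toReal)⁻¹ : ℂ))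

/-!
Fix `y ∈ Q₀ ∈ 𝒬`. If `Q` does not meet `Q₀`, then `Q^{**}` misses `Q₀^{**}` (otherwise the triple
enlargements, hence `Q` and `Q₀`, would meet), so the term of `Q` is dominated by
`sup_t T_t(·, y)` on `Q^{**} ⊆ X ∖ Q₀^{**}`, where (A₁′) controls it. If `Q` meets `Q₀`, then
`d_Q ≍ d_{Q₀}`, and the integrand is at most `|x - y|^{1-d} / d_{Q₀}` (from `T_t ≲ |x - y|^{-d}`
and the gradient bound on `ψ_Q`) and at most `d_{Q₀}^{2ν} |x - y|^{-d-2ν}` (from `t ≤ d_Q²`);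
gluing the two at `|x - y| = d_{Q₀}` gives a function whose integral does not depend on `d_{Q₀}`.
Bounded overlap of the `Q^{**}` turns the sum over `Q` into a single integral.
-/

/-- Unlike `lintegral_tsum`, this needs no measurability: the suprema over `t` in the theorem need
not be measurable. -/
theorem tsum_lintegral_le_lintegral_tsum {α ι : Type*} [MeasurableSpace α] (μ : Measure α)
    (f : ι → α → ℝ≥0∞) : ∑' n, ∫⁻ x, f n x ∂μ ≤ ∫⁻ x, ∑' n, f n x ∂μ := by
  classical
  rw [ENNReal.tsum_eq_iSup_sum]
  refine iSup_le fun s ↦ ?_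
  have hsum : ∑ n ∈ s, ∫⁻ x, f n x ∂μ ≤ ∫⁻ x, ∑ n ∈ s, f n x ∂μ := by
    induction s using Finset.induction_on with
    | empty => simp
    | insert a s ha ih =>
      simp only [Finset.sum_insert ha]
      exact (add_le_add_right ih _).trans (le_lintegral_add _ _)
  exact hsum.trans (lintegral_mono fun x ↦ ENNReal.sum_le_tsum s)

theorem tsum_setLIntegral_le_mul_lintegral {α ι : Type*} [MeasurableSpace α] {μ : Measure α}
    {s : ι → Set α} (hs : ∀ n, MeasurableSet (s n)) {C : ℝ≥0∞} (hC : C ≠ ∞)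
    (hoverlap : ∀ x, ∑' n, (s n).indicator (fun _ ↦ (1 : ℝ≥0∞)) x ≤ C)
    {F : ι → α → ℝ≥0∞} {G : α → ℝ≥0∞} (hFG : ∀ n, ∀ x ∈ s n, F n x ≤ G x) :
    ∑' n, ∫⁻ x in s n, F n x ∂μ ≤ C * ∫⁻ x, G x ∂μ :=
  calc ∑' n, ∫⁻ x in s n, F n x ∂μ ≤ ∑' n, ∫⁻ x, (s n).indicator G x ∂μ :=
        ENNReal.tsum_le_tsum fun n ↦ by
          rw [lintegral_indicator (hs n)]
          exact setLIntegral_mono' (hs n) (hFG n)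
    _ ≤ ∫⁻ x, ∑' n, (s n).indicator G x ∂μ := tsum_lintegral_le_lintegral_tsum μ _
    _ ≤ ∫⁻ x, C * G x ∂μ := lintegral_mono fun x ↦ by
        have hind : ∀ n, (s n).indicator G x = (s n).indicator (fun _ ↦ 1) x * G x :=
          fun n ↦ by by_cases hx : x ∈ s n <;> simp [hx]
        rw [tsum_congr hind, ENNReal.tsum_mul_right]
        exact mul_le_mul_left (hoverlap x) _
    _ = C * ∫⁻ x, G x ∂μ := lintegral_const_mul' _ _ hC

theorem lintegral_ofReal_dist_eq {E : Type*} [NormedAddCommGroup E] [NormedSpace ℝ E]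
    [MeasurableSpace E] [BorelSpace E] [FiniteDimensional ℝ E] [Nontrivial E]
    (μ : Measure E) [μ.IsAddHaarMeasure] (y : E) {g : ℝ → ℝ} (hg : ∀ r, 0 ≤ r → 0 ≤ g r)
    (hint : IntegrableOn (fun r ↦ r ^ (Module.finrank ℝ E - 1) * g r) (Ioi 0)) :
    ∫⁻ x, ENNReal.ofReal (g (dist x y)) ∂μ =
      ENNReal.ofReal (Module.finrank ℝ E * μ.real (ball 0 1) *
        ∫ r in Ioi 0, r ^ (Module.finrank ℝ E - 1) * g r) := by
  have hgi : Integrable (fun x ↦ g ‖x‖) μ := (integrable_fun_norm_addHaar μ).2 hint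
  simp_rw [dist_eq_norm]
  rw [lintegral_sub_right_eq_self (fun x ↦ ENNReal.ofReal (g ‖x‖)) y,
    ← ofReal_integral_eq_lintegral_ofReal hgi (.of_forall fun x ↦ hg _ (norm_nonneg x)),
    integral_fun_norm_addHaar μ g]
  simp only [nsmul_eq_mul, smul_eq_mul, mul_assoc]

/-- The bound on `T_t(x, y) |ψ_Q(x) - ψ_Q(y)|`, `r = |x - y|`, for the cuboids `Q` meeting the
cuboid of diameter `R` that contains `y`. -/
def neighborProfile (d : ℕ) (ν R r : ℝ) : ℝ :=
  if r ≤ R then R⁻¹ * r ^ (1 - (d : ℝ)) else R ^ (2 * ν) * r ^ (-(d : ℝ) - 2 * ν)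

theorem neighborProfile_nonneg (d : ℕ) (ν : ℝ) {R r : ℝ} (hR : 0 ≤ R) (hr : 0 ≤ r) :
    0 ≤ neighborProfile d ν R r := by
  unfold neighborProfile
  split_ifs <;> positivity

@[fun_prop]
theorem measurable_neighborProfile (d : ℕ) (ν R : ℝ) : Measurable (neighborProfile d ν R) :=
  Measurable.ite measurableSet_Iic (by fun_prop) (by fun_prop)

theorem pow_mul_neighborProfile {d : ℕ} (hd : 0 < d) (ν R : ℝ) {r : ℝ} (hr : 0 < r) :
    r ^ (d - 1) * neighborProfile d ν R r =
      if r ≤ R then R⁻¹ else R ^ (2 * ν) * r ^ (-1 - 2 * ν) := by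
  have hpow : r ^ (d - 1) = r ^ ((d : ℝ) - 1) := by
    rw [← Real.rpow_natCast, Nat.cast_sub hd, Nat.cast_one]
  unfold neighborProfile
  split_ifs
  · rw [hpow, mul_left_comm, ← Real.rpow_add hr]
    simp
  · rw [hpow, mul_left_comm, ← Real.rpow_add hr]
    ring_nf

theorem integral_pow_mul_neighborProfile {d : ℕ} (hd : 0 < d) {ν R : ℝ} (hν : 0 < ν) (hR : 0 < R) :
    IntegrableOn (fun r ↦ r ^ (d - 1) * neighborProfile d ν R r) (Ioi 0) ∧
      ∫ r in Ioi 0, r ^ (d - 1) * neighborProfile d ν R r = 1 + (2 * ν)⁻¹ := by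
  have hexp : -1 - 2 * ν < -1 := by linarith
  have hnear : EqOn (fun r ↦ r ^ (d - 1) * neighborProfile d ν R r) (fun _ ↦ R⁻¹) (Ioc 0 R) :=
    fun r hr ↦ by simp [pow_mul_neighborProfile hd ν R hr.1, hr.2]
  have hfar : EqOn (fun r ↦ r ^ (d - 1) * neighborProfile d ν R r)
      (fun r ↦ R ^ (2 * ν) * r ^ (-1 - 2 * ν)) (Ioi R) :=
    fun r hr ↦ by simp [pow_mul_neighborProfile hd ν R (hR.trans hr), not_le.2 (mem_Ioi.1 hr)]
  have hint_near : IntegrableOn (fun r ↦ r ^ (d - 1) * neighborProfile d ν R r) (Ioc 0 R) :=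
    (integrableOn_congr_fun hnear measurableSet_Ioc).2 (integrableOn_const measure_Ioc_lt_top.ne)
  have hint_far : IntegrableOn (fun r ↦ r ^ (d - 1) * neighborProfile d ν R r) (Ioi R) :=
    (integrableOn_congr_fun hfar measurableSet_Ioi).2
      ((integrableOn_Ioi_rpow_of_lt hexp hR).const_mul _)
  have hcancel : R ^ (2 * ν) * R ^ (-(2 * ν)) = 1 := by
    rw [← Real.rpow_add hR, add_neg_cancel, Real.rpow_zero]
  rw [← Ioc_union_Ioi_eq_Ioi hR.le]
  refine ⟨hint_near.union hint_far, ?_⟩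
  rw [setIntegral_union Ioc_disjoint_Ioi_same measurableSet_Ioi hint_near hint_far,
    setIntegral_congr_fun measurableSet_Ioc hnear, setIntegral_congr_fun measurableSet_Ioi hfar,
    setIntegral_const, integral_const_mul, integral_Ioi_rpow_of_lt hexp hR,
    Real.volume_real_Ioc_of_le hR.le, show -1 - 2 * ν + 1 = -(2 * ν) by ring, smul_eq_mul,
    sub_zero, mul_inv_cancel₀ hR.ne', neg_div, mul_neg, ← mul_div_assoc, hcancel, div_neg,
    neg_neg, one_div]

theorem lintegral_neighborProfile_dist {E : Type*} [NormedAddCommGroup E] [NormedSpace ℝ E]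
    [MeasurableSpace E] [BorelSpace E] [FiniteDimensional ℝ E]
    (μ : Measure E) [μ.IsAddHaarMeasure] (y : E) {ν R : ℝ} (hν : 0 < ν) (hR : 0 < R) :
    ∫⁻ x, ENNReal.ofReal (neighborProfile (Module.finrank ℝ E) ν R (dist x y)) ∂μ =
      ENNReal.ofReal (Module.finrank ℝ E * μ.real (ball 0 1) * (1 + (2 * ν)⁻¹)) := by
  rcases (Module.finrank ℝ E).eq_zero_or_pos with hd | hd
  · have : Subsingleton E := Module.finrank_zero_iff.1 hd
    simp [hd, neighborProfile, hR.le, Subsingleton.elim _ y]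
  · have : Nontrivial E := Module.nontrivial_of_finrank_pos hd
    obtain ⟨hint, hval⟩ := integral_pow_mul_neighborProfile hd hν hR
    rw [lintegral_ofReal_dist_eq μ y (fun r ↦ neighborProfile_nonneg _ ν hR.le) hint, hval]

theorem lintegral_ofReal_mul_neighborProfile_le {d : ℕ} (y : Rd d) {K ν R : ℝ} (hK : 0 ≤ K)
    (hν : 0 < ν) (hR : 0 ≤ R) :
    ∫⁻ x, ENNReal.ofReal (K * neighborProfile d ν R (dist x y)) ≤
      ENNReal.ofReal (K * (d * volume.real (ball (0 : Rd d) 1) * (1 + (2 * ν)⁻¹))) := by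
  simp_rw [ENNReal.ofReal_mul hK]
  rw [lintegral_const_mul' _ _ ENNReal.ofReal_ne_top]
  gcongr
  rcases hR.eq_or_lt with rfl | hR
  -- `0⁻¹ = 0` and `0 ^ (2 * ν) = 0`: the profile vanishes for `R = 0`
  · simp [neighborProfile, Real.zero_rpow (mul_pos two_pos hν).ne']
  · simpa using (lintegral_neighborProfile_dist (volume : Measure (Rd d)) y hν hR).le

theorem add_sq_rpow_neg_le {t ρ a : ℝ} (ht : 0 ≤ t) (hρ : 0 < ρ) (ha : 0 ≤ a) :
    (t + ρ ^ 2) ^ (-a) ≤ ρ ^ (-(2 * a)) :=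
  calc (t + ρ ^ 2) ^ (-a) ≤ (ρ ^ 2) ^ (-a) :=
        Real.rpow_le_rpow_of_nonpos (by positivity) (by linarith) (by linarith)
    _ = ρ ^ (-(2 * a)) := by
        rw [← Real.rpow_natCast, ← Real.rpow_mul hρ.le]
        ring_nf

theorem rpow_mul_add_sq_rpow_le_rpow_neg {t ρ ν s : ℝ} (ht : 0 < t) (hρ : 0 < ρ) (hν : 0 ≤ ν)
    (hs : 0 ≤ s) : t ^ ν * (t + ρ ^ 2) ^ (-s / 2 - ν) ≤ ρ ^ (-s) := by
  have hpos : 0 < t + ρ ^ 2 := by positivity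
  have hratio : t ^ ν * (t + ρ ^ 2) ^ (-ν) ≤ 1 := by
    rw [Real.rpow_neg hpos.le, ← div_eq_mul_inv, div_le_one (by positivity)]
    exact Real.rpow_le_rpow ht.le (by linarith [sq_nonneg ρ]) hν
  calc t ^ ν * (t + ρ ^ 2) ^ (-s / 2 - ν)
      = t ^ ν * (t + ρ ^ 2) ^ (-ν) * (t + ρ ^ 2) ^ (-(s / 2)) := by
        rw [mul_assoc, ← Real.rpow_add hpos]
        ring_nf
    _ ≤ 1 * ρ ^ (-(2 * (s / 2))) :=
        mul_le_mul hratio (add_sq_rpow_neg_le ht.le hρ (by linarith)) (by positivity) zero_le_one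
    _ = ρ ^ (-s) := by ring_nf

theorem kernel_mul_le_of_lipschitz {d : ℕ} {t ρ ν C₀ T u L : ℝ} (ht : 0 < t) (hρ : 0 < ρ)
    (hν : 0 ≤ ν) (hC₀ : 0 ≤ C₀) (hT : T ≤ C₀ * t ^ ν * (t + ρ ^ 2) ^ (-(d : ℝ) / 2 - ν))
    (hu0 : 0 ≤ u) (hu : u ≤ L * ρ) : T * u ≤ C₀ * L * ρ ^ (1 - (d : ℝ)) := by
  have hTρ : T ≤ C₀ * ρ ^ (-(d : ℝ)) := hT.trans <| by
    rw [mul_assoc]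
    gcongr
    exact rpow_mul_add_sq_rpow_le_rpow_neg ht hρ hν (Nat.cast_nonneg d)
  calc T * u ≤ C₀ * ρ ^ (-(d : ℝ)) * (L * ρ) := mul_le_mul hTρ hu hu0 (by positivity)
    _ = C₀ * L * ρ ^ (1 - (d : ℝ)) := by
        rw [sub_eq_add_neg, Real.rpow_add hρ, Real.rpow_one]
        ring

theorem kernel_le_of_le_sq {d : ℕ} {t ρ ν C₀ T δ : ℝ} (ht : 0 < t) (htδ : t ≤ δ ^ 2)
    (hδ : 0 ≤ δ) (hρ : 0 < ρ) (hν : 0 ≤ ν) (hC₀ : 0 ≤ C₀)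
    (hT : T ≤ C₀ * t ^ ν * (t + ρ ^ 2) ^ (-(d : ℝ) / 2 - ν)) :
    T ≤ C₀ * δ ^ (2 * ν) * ρ ^ (-(d : ℝ) - 2 * ν) := by
  have hdecay := add_sq_rpow_neg_le ht.le hρ (a := d / 2 + ν) (by positivity)
  rw [show -(d / 2 + ν) = -(d : ℝ) / 2 - ν by ring,
    show -(2 * (d / 2 + ν)) = -(d : ℝ) - 2 * ν by ring] at hdecay
  have htν : t ^ ν ≤ δ ^ (2 * ν) := by
    calc t ^ ν ≤ (δ ^ 2) ^ ν := by gcongr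
      _ = δ ^ (2 * ν) := by
          rw [← Real.rpow_natCast, ← Real.rpow_mul hδ]
          norm_num
  exact hT.trans (by gcongr)

theorem setOf_forall_mem_eq_iInter {d : ℕ} (I : Fin d → Set ℝ) :
    {x : Rd d | ∀ i, x i ∈ I i} = ⋂ i, EuclideanSpace.proj i ⁻¹' I i := by
  ext
  simp

theorem convex_setOf_forall_mem {d : ℕ} {I : Fin d → Set ℝ} (hI : ∀ i, (I i).OrdConnected) :
    Convex ℝ {x : Rd d | ∀ i, x i ∈ I i} := by
  rw [setOf_forall_mem_eq_iInter]
  exact convex_iInter fun i ↦ (hI i).convex.linear_preimage (EuclideanSpace.proj i).toLinearMap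

theorem measurableSet_setOf_forall_mem {d : ℕ} {I : Fin d → Set ℝ}
    (hI : ∀ i, (I i).OrdConnected) : MeasurableSet {x : Rd d | ∀ i, x i ∈ I i} := by
  rw [setOf_forall_mem_eq_iInter]
  exact .iInter fun i ↦ (hI i).measurableSet.preimage (EuclideanSpace.proj i).continuous.measurable

theorem measurableSet_cuboid {d : ℕ} {X : Set (Rd d)} (hX : MeasurableSet X) (z : Rd d)
    (r : Fin d → ℝ) : MeasurableSet (cuboid X z r) := by
  have h : cuboid X z r = X ∩ ⋂ i, {x | |x i - z i| ≤ r i} := by ext; simp [cuboid]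
  rw [h]
  exact hX.inter (.iInter fun i ↦ measurableSet_le (by fun_prop) measurable_const)

namespace AdmissibleCovering

variable {d : ℕ} {X : Set (Rd d)} {κ : ℝ} {ι : Type} (cov : AdmissibleCovering d X κ ι)

theorem Q_subset (n : ι) (k : ℕ) : cov.Q n k ⊆ X := fun _ hx ↦ hx.1

theorem Q_zero (n : ι) : cov.Q n 0 = cuboid X (cov.z n) (cov.r n) := by
  simp [Q, cuboidSt]

theorem Q_mono (hκ : 1 ≤ κ) (n : ι) {k l : ℕ} (hkl : k ≤ l) : cov.Q n k ⊆ cov.Q n l :=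
  fun _ hx ↦ ⟨hx.1, fun i ↦ (hx.2 i).trans <|
    mul_le_mul_of_nonneg_right (pow_le_pow_right₀ hκ hkl) (cov.r_pos n i).le⟩

theorem measurableSet_Q (hX : MeasurableSet X) (n : ι) (k : ℕ) : MeasurableSet (cov.Q n k) :=
  measurableSet_cuboid hX _ _

theorem exists_mem_Q_zero {y : Rd d} (hy : y ∈ X) : ∃ n, y ∈ cov.Q n 0 := by
  simpa only [Q_zero, mem_iUnion] using cov.covers hy

theorem inter_Q_zero_nonempty (hκ : 1 ≤ κ) {m n : ι} (h : (cov.Q m 2 ∩ cov.Q n 2).Nonempty) :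
    (cov.Q m 0 ∩ cov.Q n 0).Nonempty := by
  simpa only [Q_zero] using
    (cov.neighbors m n).1 (h.mono (inter_subset_inter (cov.Q_mono hκ m (by norm_num))
      (cov.Q_mono hκ n (by norm_num))))

theorem diam_Q_zero_le {m n : ι} (h : (cov.Q m 0 ∩ cov.Q n 0).Nonempty) :
    diam (cov.Q n 0) ≤ cov.C₂ * diam (cov.Q m 0) := by
  simpa only [Q_zero] using cov.comparable m n (by simpa only [Q_zero] using h)

theorem tsum_indicator_Q_two_le (hκ : 1 ≤ κ) (x : Rd d) :
    ∑' n, (cov.Q n 2).indicator (fun _ ↦ (1 : ℝ≥0∞)) x ≤ cov.C₃ :=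
  (ENNReal.tsum_le_tsum fun n ↦ indicator_le_indicator_of_subset
    (cov.Q_mono hκ n (by norm_num)) (fun _ ↦ bot_le) x).trans (cov.finite_overlap x)

theorem mul_le_neighborProfile {n₀ n : ι} (hnb : (cov.Q n 0 ∩ cov.Q n₀ 0).Nonempty)
    {ν C₀ C₃ t ρ T u : ℝ} (hν : 0 < ν) (hC₀ : 0 ≤ C₀) (hC₃ : 0 ≤ C₃) (ht : 0 < t)
    (htδ : t ≤ diam (cov.Q n 0) ^ 2) (hρ : 0 ≤ ρ) (hT0 : 0 ≤ T)
    (hT : T ≤ C₀ * t ^ ν * (t + ρ ^ 2) ^ (-(d : ℝ) / 2 - ν)) (hu0 : 0 ≤ u) (hu1 : u ≤ 1)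
    (hlip : u ≤ C₃ / diam (cov.Q n 0) * ρ) :
    T * u ≤ C₀ * (cov.C₂ * C₃ + cov.C₂ ^ (2 * ν)) * neighborProfile d ν (diam (cov.Q n₀ 0)) ρ := by
  set δ := diam (cov.Q n 0)
  set D := diam (cov.Q n₀ 0)
  have hC₂ := cov.C₂_pos
  have hδD : δ ≤ cov.C₂ * D := cov.diam_Q_zero_le (inter_comm _ _ ▸ hnb)
  have hDδ : D ≤ cov.C₂ * δ := cov.diam_Q_zero_le hnb
  have hδ : 0 < δ := by nlinarith [diam_nonneg (s := cov.Q n 0)]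
  have hD : 0 < D := pos_of_mul_pos_right (hδ.trans_le hδD) hC₂.le
  have hK : 0 ≤ C₀ * (cov.C₂ * C₃ + cov.C₂ ^ (2 * ν)) := by positivity
  rcases hρ.eq_or_lt with rfl | hρ
  · have hu : u = 0 := le_antisymm (by simpa using hlip) hu0
    rw [hu, mul_zero]
    exact mul_nonneg hK (neighborProfile_nonneg d ν hD.le le_rfl)
  unfold neighborProfile
  split_ifs
  · have hL : C₃ / δ ≤ cov.C₂ * C₃ / D := by
      rw [div_le_div_iff₀ hδ hD]
      nlinarith
    calc T * u ≤ C₀ * (cov.C₂ * C₃ / D) * ρ ^ (1 - (d : ℝ)) :=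
          kernel_mul_le_of_lipschitz ht hρ hν.le hC₀ hT hu0 (hlip.trans (by gcongr))
      _ = C₀ * (cov.C₂ * C₃) * (D⁻¹ * ρ ^ (1 - (d : ℝ))) := by ring
      _ ≤ _ := by
          gcongr
          exact le_add_of_nonneg_right (by positivity)
  · calc T * u ≤ T := mul_le_of_le_one_right hT0 hu1
      _ ≤ C₀ * (cov.C₂ * D) ^ (2 * ν) * ρ ^ (-(d : ℝ) - 2 * ν) :=
          kernel_le_of_le_sq ht (htδ.trans (by gcongr)) (by positivity) hρ hν.le hC₀ hT
      _ = C₀ * cov.C₂ ^ (2 * ν) * (D ^ (2 * ν) * ρ ^ (-(d : ℝ) - 2 * ν)) := by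
          rw [Real.mul_rpow hC₂.le hD.le]
          ring
      _ ≤ _ := by
          gcongr
          exact le_add_of_nonneg_left (by positivity)

theorem iSup_le_far_add_near (hκ : 1 ≤ κ) (hXc : Convex ℝ X) {T : ℝ → Rd d → Rd d → ℝ}
    {C₀ ν : ℝ} (hC₀ : 0 ≤ C₀) (hν : 0 < ν)
    (hA0 : ∀ t > 0, ∀ x ∈ X, ∀ y ∈ X,
      0 ≤ T t x y ∧ T t x y ≤ C₀ * t ^ ν * (t + dist x y ^ 2) ^ (-(d : ℝ) / 2 - ν))
    {ψ : ι → Rd d → ℝ} {C₃ : ℝ} (hC₃ : 0 ≤ C₃) (hψ : ∀ n, DifferentiableOn ℝ (ψ n) X)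
    (hψ01 : ∀ n, ∀ x ∈ X, ψ n x ∈ Icc (0 : ℝ) 1)
    (hψgrad : ∀ n, ∀ x ∈ X, ‖fderivWithin ℝ (ψ n) X x‖ ≤ C₃ / diam (cov.Q n 0))
    {n₀ n : ι} {x y : Rd d} (hy : y ∈ cov.Q n₀ 0) (hx : x ∈ cov.Q n 2) :
    ⨆ (t : ℝ) (_ : 0 < t) (_ : t ≤ diam (cov.Q n 0) ^ 2),
        ENNReal.ofReal (T t x y * |ψ n x - ψ n y|) ≤
      (X \ cov.Q n₀ 2).indicator (fun x ↦ ⨆ (t : ℝ) (_ : 0 < t), ENNReal.ofReal (T t x y)) x +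
        ENNReal.ofReal (C₀ * (cov.C₂ * C₃ + cov.C₂ ^ (2 * ν)) *
          neighborProfile d ν (diam (cov.Q n₀ 0)) (dist x y)) := by
  have hxX := cov.Q_subset n 2 hx
  have hyX := cov.Q_subset n₀ 0 hy
  have hu1 : |ψ n x - ψ n y| ≤ 1 := abs_sub_le_of_nonneg_of_le
    (hψ01 n x hxX).1 (hψ01 n x hxX).2 (hψ01 n y hyX).1 (hψ01 n y hyX).2
  refine iSup₂_le fun t ht ↦ iSup_le fun htδ ↦ ?_
  obtain ⟨hT0, hT⟩ := hA0 t ht x hxX y hyX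
  by_cases hnb : (cov.Q n 0 ∩ cov.Q n₀ 0).Nonempty
  · have hlip : |ψ n x - ψ n y| ≤ C₃ / diam (cov.Q n 0) * dist x y := by
      simpa [Real.norm_eq_abs, dist_eq_norm] using
        hXc.norm_image_sub_le_of_norm_fderivWithin_le (hψ n) (hψgrad n) hyX hxX
    exact le_add_left (ENNReal.ofReal_le_ofReal (cov.mul_le_neighborProfile hnb hν hC₀ hC₃ ht htδ
      dist_nonneg hT0 hT (abs_nonneg _) hu1 hlip))
  · have hxfar : x ∈ X \ cov.Q n₀ 2 :=
      ⟨hxX, fun hx₀ ↦ hnb (cov.inter_Q_zero_nonempty hκ ⟨x, hx, hx₀⟩)⟩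
    refine le_add_right ?_
    rw [indicator_of_mem hxfar]
    exact (ENNReal.ofReal_le_ofReal (mul_le_of_le_one_right hT0 hu1)).trans
      (le_iSup₂ (f := fun t (_ : 0 < t) ↦ ENNReal.ofReal (T t x y)) t ht)

end AdmissibleCovering

theorem stmt3_general
    {d : ℕ} {X : Set (Rd d)} {κ : ℝ} (hκ : 1 < κ)
    (I : Fin d → Set ℝ) (hIord : ∀ i, (I i).OrdConnected)
    (hX : X = {x : Rd d | ∀ i, x i ∈ I i})
    {ι : Type} (cov : AdmissibleCovering d X κ ι)
    (T : ℝ → Rd d → Rd d → ℝ)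
    (C₀ ν : ℝ) (hC₀ : 0 < C₀) (hν : ν ∈ Set.Ioo (0 : ℝ) 1)
    -- (A₀′)
    (hA0 : ∀ t > 0, ∀ x ∈ X, ∀ y ∈ X,
      0 ≤ T t x y ∧ T t x y ≤ C₀ * t ^ ν * (t + dist x y ^ 2) ^ (-(d : ℝ) / 2 - ν))
    -- (A₁′)
    (hA1 : ∀ n : ι, ∀ y ∈ cov.Q n 1,
      (∫⁻ x in X \ cov.Q n 2, ⨆ (t : ℝ) (_ : 0 < t), ENNReal.ofReal (T t x y))
        ≤ ENNReal.ofReal C₀)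
    -- the partition of unity
    (ψ : ι → Rd d → ℝ) (C₃ : ℝ) (hC₃ : 0 < C₃)
    (hψC1 : ∀ n, ContDiffOn ℝ 1 (ψ n) X)
    (hψnonneg : ∀ n, ∀ x ∈ X, 0 ≤ ψ n x)
    (hψsupp : ∀ n, ∀ x ∈ X,
      ψ n x ≤ (cov.Q n 1).indicator (fun _ => (1 : ℝ)) x)
    (hψgrad : ∀ n, ∀ x ∈ X,
      ‖fderivWithin ℝ (ψ n) X x‖ ≤ C₃ / diam (cov.Q n 0)) :
    ∃ C > 0, ∀ y ∈ X,
      (∑' n, ∫⁻ x in cov.Q n 2,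
          ⨆ (t : ℝ) (_ : 0 < t) (_ : t ≤ diam (cov.Q n 0) ^ 2),
            ENNReal.ofReal (T t x y * |ψ n x - ψ n y|))
        ≤ ENNReal.ofReal C := by
  have hκ' : 1 ≤ κ := hκ.le
  have hν0 : 0 < ν := hν.1
  have hXmeas : MeasurableSet X := hX ▸ measurableSet_setOf_forall_mem hIord
  have hψ01 : ∀ n, ∀ x ∈ X, ψ n x ∈ Icc (0 : ℝ) 1 := fun n x hx ↦
    ⟨hψnonneg n x hx, (hψsupp n x hx).trans (indicator_le_self' (fun _ _ ↦ zero_le_one) x)⟩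
  have hC₂ := cov.C₂_pos
  set K := C₀ * (cov.C₂ * C₃ + cov.C₂ ^ (2 * ν))
  set B := K * (d * volume.real (ball (0 : Rd d) 1) * (1 + (2 * ν)⁻¹))
  refine ⟨cov.C₃.toReal * (C₀ + B) + 1, by positivity, fun y hy ↦ ?_⟩
  obtain ⟨n₀, hn₀⟩ := cov.exists_mem_Q_zero hy
  calc _ ≤ cov.C₃ * ∫⁻ x, ((X \ cov.Q n₀ 2).indicator
          (fun x ↦ ⨆ (t : ℝ) (_ : 0 < t), ENNReal.ofReal (T t x y)) x +
        ENNReal.ofReal (K * neighborProfile d ν (diam (cov.Q n₀ 0)) (dist x y))) :=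
        tsum_setLIntegral_le_mul_lintegral (cov.measurableSet_Q hXmeas · 2) cov.C₃_lt_top.ne
          (cov.tsum_indicator_Q_two_le hκ') fun n x hx ↦
            cov.iSup_le_far_add_near hκ' (hX ▸ convex_setOf_forall_mem hIord) hC₀.le hν0 hA0
              hC₃.le (fun n ↦ (hψC1 n).differentiableOn one_ne_zero) hψ01 hψgrad hn₀ hx
    _ ≤ cov.C₃ * (ENNReal.ofReal C₀ + ENNReal.ofReal B) := by
        rw [lintegral_add_right _ (by fun_prop),
          lintegral_indicator (hXmeas.diff (cov.measurableSet_Q hXmeas n₀ 2))]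
        gcongr
        · exact hA1 n₀ y (cov.Q_mono hκ' n₀ zero_le_one hn₀)
        · exact lintegral_ofReal_mul_neighborProfile_le y (by positivity) hν0 diam_nonneg
    _ ≤ ENNReal.ofReal (cov.C₃.toReal * (C₀ + B) + 1) := by
        rw [← ENNReal.ofReal_add hC₀.le (by positivity), ← ENNReal.ofReal_toReal cov.C₃_lt_top.ne,
          ← ENNReal.ofReal_mul ENNReal.toReal_nonneg, ENNReal.toReal_ofReal ENNReal.toReal_nonneg]
        exact ENNReal.ofReal_le_ofReal (le_add_of_nonneg_right zero_le_one)

/-- If `X ⊆ ℝ^d` is a product of open intervals, `𝒬` is an admissible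
covering of `X`, `T` satisfies (A₀′) and (A₁′), and `{ψ_Q}` is a `C¹` partition of unity
subordinate to `𝒬` (with `0 ≤ ψ_Q ≤ χ_{Q^*}`, `‖∇ψ_Q‖_∞ ≤ C₃ d_Q⁻¹` and `Σ ψ_Q = 1` on `X`),
then `sup_{y∈X} Σ_Q ∫_{Q^{**}} sup_{0<t≤d_Q²} T_t(x,y)|ψ_Q(x) − ψ_Q(y)| dx ≤ C`. -/
theorem stmt3
    {d : ℕ} {X : Set (Rd d)} {κ : ℝ} (hκ : 1 < κ)
    (I : Fin d → Set ℝ) (hIopen : ∀ i, IsOpen (I i)) (hIord : ∀ i, (I i).OrdConnected)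
    (hX : X = {x : Rd d | ∀ i, x i ∈ I i})
    {ι : Type} [Countable ι] (cov : AdmissibleCovering d X κ ι)
    (T : ℝ → Rd d → Rd d → ℝ)
    (hTmeas : Measurable fun p : ℝ × Rd d × Rd d => T p.1 p.2.1 p.2.2)
    (C₀ ν : ℝ) (hC₀ : 0 < C₀) (hν : ν ∈ Set.Ioo (0 : ℝ) 1)
    -- (A₀′)
    (hA0 : ∀ t > 0, ∀ x ∈ X, ∀ y ∈ X,
      0 ≤ T t x y ∧ T t x y ≤ C₀ * t ^ ν * (t + dist x y ^ 2) ^ (-(d : ℝ) / 2 - ν))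
    -- (A₁′)
    (hA1 : ∀ n : ι, ∀ y ∈ cov.Q n 1,
      (∫⁻ x in X \ cov.Q n 2, ⨆ (t : ℝ) (_ : 0 < t), ENNReal.ofReal (T t x y))
        ≤ ENNReal.ofReal C₀)
    -- the partition of unity
    (ψ : ι → Rd d → ℝ) (C₃ : ℝ) (hC₃ : 0 < C₃)
    (hψC1 : ∀ n, ContDiffOn ℝ 1 (ψ n) X)
    (hψnonneg : ∀ n, ∀ x ∈ X, 0 ≤ ψ n x)
    (hψsupp : ∀ n, ∀ x ∈ X,
      ψ n x ≤ (cov.Q n 1).indicator (fun _ => (1 : ℝ)) x)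
    (hψgrad : ∀ n, ∀ x ∈ X,
      ‖fderivWithin ℝ (ψ n) X x‖ ≤ C₃ / diam (cov.Q n 0))
    (hψsum : ∀ x ∈ X, HasSum (fun n => ψ n x) 1) :
    ∃ C > 0, ∀ y ∈ X,
      (∑' n, ∫⁻ x in cov.Q n 2,
          ⨆ (t : ℝ) (_ : 0 < t) (_ : t ≤ diam (cov.Q n 0) ^ 2),
            ENNReal.ofReal (T t x y * |ψ n x - ψ n y|))
        ≤ ENNReal.ofReal C :=
  stmt3_general hκ I hIord hX cov T C₀ ν hC₀ hν hA0 hA1 ψ C₃ hC₃ hψC1 hψnonneg hψsupp hψgrad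
end
end

section
/- Let ν ∈ (0,1) and θ_ν := π/(1+ν) ∈ (π/2, π). For s > 0 define g_ν(s) := ∫₀^∞ exp(w s cos θ_ν + w^ν cos θ_ν) · sin(s w sin θ_ν − w^ν sin θ_ν + θ_ν) dw. Then the integral converges absolutely for every s > 0 and there exists a constant C, depending only on ν, such that |g_ν(s)| ≤ C s⁻¹ for all s > 0; in fact |g_ν(s)| ≤ s⁻¹ (1 + 1/|cos θ_ν|). -/
open MeasureTheory Set Filter
open scoped ENNReal NNReal

noncomputable section

lemma integral_exp_neg_mul_Ioi_zero {b : ℝ} (hb : 0 < b) :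
    ∫ x in Set.Ioi (0 : ℝ), Real.exp (-b * x) = b⁻¹ := by
  have h := integral_exp_neg_mul_rpow one_pos hb
  simp_rw [Real.rpow_one] at h
  rw [h, (by norm_num : (-1:ℝ)/1 = -1), (by norm_num : (1:ℝ)/1 + 1 = 2),
    Real.Gamma_two, Real.rpow_neg_one, mul_one]

/-- For `ν ∈ (0,1)` and `θ_ν = π/(1+ν)`, the defining integral of the
subordination density `g_ν(s)` converges absolutely for every `s > 0`, and
`|g_ν(s)| ≤ s⁻¹ (1 + 1/|cos θ_ν|)`; in particular `|g_ν(s)| ≤ C s⁻¹` for a constant `C`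
depending only on `ν`. -/
theorem stmt7 (ν : ℝ) (hν : ν ∈ Set.Ioo (0 : ℝ) 1) :
    (∀ s > (0 : ℝ), IntegrableOn
        (fun w : ℝ => Real.exp (w * s * Real.cos (Real.pi / (1 + ν)) +
            w ^ ν * Real.cos (Real.pi / (1 + ν))) *
          Real.sin (s * w * Real.sin (Real.pi / (1 + ν)) -
            w ^ ν * Real.sin (Real.pi / (1 + ν)) + Real.pi / (1 + ν)))
        (Set.Ioi 0) volume) ∧
    (∀ s > (0 : ℝ),
      |∫ w in Set.Ioi (0 : ℝ),
          Real.exp (w * s * Real.cos (Real.pi / (1 + ν)) +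
            w ^ ν * Real.cos (Real.pi / (1 + ν))) *
          Real.sin (s * w * Real.sin (Real.pi / (1 + ν)) -
            w ^ ν * Real.sin (Real.pi / (1 + ν)) + Real.pi / (1 + ν))|
        ≤ s⁻¹ * (1 + 1 / |Real.cos (Real.pi / (1 + ν))|)) ∧
    (∃ C > 0, ∀ s > (0 : ℝ),
      |∫ w in Set.Ioi (0 : ℝ),
          Real.exp (w * s * Real.cos (Real.pi / (1 + ν)) +
            w ^ ν * Real.cos (Real.pi / (1 + ν))) *
          Real.sin (s * w * Real.sin (Real.pi / (1 + ν)) -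
            w ^ ν * Real.sin (Real.pi / (1 + ν)) + Real.pi / (1 + ν))|
        ≤ C * s⁻¹) := by
  obtain ⟨hν0, hν1⟩ := hν
  set θ := Real.pi / (1 + ν) with hθ
  have hpi := Real.pi_pos
  have h1ν : (1 : ℝ) < 1 + ν := by linarith
  have hθlt : θ < Real.pi := by
    rw [hθ]; rw [div_lt_iff₀ (by linarith)]; nlinarith
  have hθgt : Real.pi / 2 < θ := by
    rw [hθ, div_lt_div_iff₀ (by norm_num) (by linarith)]
    nlinarith
  have hc : Real.cos θ < 0 :=
    Real.cos_neg_of_pi_div_two_lt_of_lt hθgt (by linarith)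
  have hcabs : Real.cos θ = -|Real.cos θ| := by
    rw [abs_of_neg hc]; ring
  have hcpos : 0 < |Real.cos θ| := abs_pos.mpr hc.ne
  set f := fun s : ℝ => fun w : ℝ =>
    Real.exp (w * s * Real.cos θ + w ^ ν * Real.cos θ) *
      Real.sin (s * w * Real.sin θ - w ^ ν * Real.sin θ + θ) with hf
  have hmeas : ∀ s : ℝ, AEStronglyMeasurable (f s) (volume.restrict (Set.Ioi 0)) := by
    intro s
    have : Measurable (f s) := by rw [hf]; fun_prop
    exact this.aestronglyMeasurable
  have hbound : ∀ s : ℝ, 0 < s → ∀ w ∈ Set.Ioi (0 : ℝ),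
      ‖f s w‖ ≤ Real.exp (-(s * |Real.cos θ|) * w) := by
    intro s hs w hw
    have hw0 : (0 : ℝ) < w := hw
    have hwν : (0 : ℝ) ≤ w ^ ν := Real.rpow_nonneg hw0.le ν
    have : ‖f s w‖ ≤ Real.exp (w * s * Real.cos θ + w ^ ν * Real.cos θ) := by
      rw [hf, norm_mul, Real.norm_eq_abs, Real.norm_eq_abs, Real.abs_exp]
      calc Real.exp _ * |Real.sin _| ≤ Real.exp _ * 1 :=
            mul_le_mul_of_nonneg_left (Real.abs_sin_le_one _) (Real.exp_pos _).le
        _ = _ := mul_one _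
    refine this.trans (Real.exp_le_exp.mpr ?_)
    have h2 : w ^ ν * Real.cos θ ≤ 0 := mul_nonpos_of_nonneg_of_nonpos hwν hc.le
    have habs : -(s * |Real.cos θ|) * w = w * s * Real.cos θ := by
      rw [abs_of_neg hc]; ring
    rw [habs]
    linarith
  have hgint : ∀ s : ℝ, 0 < s →
      IntegrableOn (fun w => Real.exp (-(s * |Real.cos θ|) * w)) (Set.Ioi 0) volume :=
    fun s hs => exp_neg_integrableOn_Ioi 0 (by positivity)
  have hint : ∀ s > (0 : ℝ), IntegrableOn (f s) (Set.Ioi 0) volume := by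
    intro s hs
    refine (hgint s hs).mono' (hmeas s) ?_
    filter_upwards [ae_restrict_mem measurableSet_Ioi] with w hw
    exact hbound s hs w hw
  have hkey : ∀ s > (0 : ℝ),
      |∫ w in Set.Ioi (0 : ℝ), f s w| ≤ s⁻¹ * |Real.cos θ|⁻¹ := by
    intro s hs
    have h1 : |∫ w in Set.Ioi (0 : ℝ), f s w|
        ≤ ∫ w in Set.Ioi (0 : ℝ), Real.exp (-(s * |Real.cos θ|) * w) := by
      have h0 : |∫ w in Set.Ioi (0 : ℝ), f s w| ≤ ∫ w in Set.Ioi (0 : ℝ), ‖f s w‖ :=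
        norm_integral_le_integral_norm (fun w => f s w)
      refine h0.trans ?_
      refine setIntegral_mono_on ((hint s hs).norm) (hgint s hs) measurableSet_Ioi ?_
      intro w hw
      exact hbound s hs w hw
    rw [integral_exp_neg_mul_Ioi_zero (by positivity : (0:ℝ) < s * |Real.cos θ|)] at h1
    rwa [mul_inv] at h1
  refine ⟨hint, ?_, ?_⟩
  · intro s hs
    refine (hkey s hs).trans ?_
    rw [one_div]
    have : |Real.cos θ|⁻¹ ≤ 1 + |Real.cos θ|⁻¹ := by linarith
    exact mul_le_mul_of_nonneg_left this (by positivity)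
  · refine ⟨1 + |Real.cos θ|⁻¹, by positivity, fun s hs => ?_⟩
    refine (hkey s hs).trans ?_
    rw [mul_comm]
    have : |Real.cos θ|⁻¹ ≤ 1 + |Real.cos θ|⁻¹ := by linarith
    exact mul_le_mul_of_nonneg_right this (by positivity)
end
end

section
/- Let X ⊆ ℝ^d be a measurable set, let T and H be measurable kernels on (0,∞) × X × X with values in [0,∞), and let Q be a cuboid in X with diameter d_Q such that |Q^{**}| ≤ C₃ d_Q^d. Assume: (i) |T_u(x,y) − H_u(x,y)| ≤ C₁ u^{−d/2} for all u > 0, x,y ∈ X; (ii) for some δ ∈ (0,1), sup_{y∈Q^*} ∫_{Q^{**}} sup_{0<u≤d_Q²} u^{−δ} |T_u(x,y) − H_u(x,y)| dx ≤ C₂ d_Q^{−2δ}; (iii) g : (0,∞) → [0,∞) is measurable with g(s) ≤ C₄ s⁻¹ for all s > 0. Define K_t(x,y) := ∫₀^∞ T_{ts}(x,y) g(s) ds and P_t(x,y) := ∫₀^∞ H_{ts}(x,y) g(s) ds. Then there is a constant C, depending only on d, δ, C₁, C₂, C₃, C₄, such that sup_{y∈Q^*} ∫_{Q^{**}} sup_{0<t≤d_Q²}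 |K_t(x,y) − P_t(x,y)| dx ≤ C. -/
open MeasureTheory Set Metric Filter
open scoped ENNReal NNReal

noncomputable section

theorem dim_pos_of_diam_pos {d : ℕ} {s : Set (Rd d)} (h : 0 < diam s) : 0 < d := by
  rcases Nat.eq_zero_or_pos d with rfl | hd
  · exact absurd (diam_subsingleton Set.subsingleton_of_subsingleton) h.ne'
  · exact hd

theorem setLIntegral_le_mul_add_mul {α : Type*} [MeasurableSpace α] {μ : Measure α} {s : Set α}
    {f F : α → ℝ≥0∞} {a b A B : ℝ≥0∞} (hs : MeasurableSet s) (ha : a ≠ ⊤)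
    (hf : ∀ x ∈ s, f x ≤ a * F x + b) (hF : ∫⁻ x in s, F x ∂μ ≤ A) (hμ : μ s ≤ B) :
    ∫⁻ x in s, f x ∂μ ≤ a * A + b * B := calc
  ∫⁻ x in s, f x ∂μ ≤ ∫⁻ x in s, (a * F x + b) ∂μ := setLIntegral_mono' hs hf
  _ = a * ∫⁻ x in s, F x ∂μ + b * μ s := by
    rw [lintegral_add_right _ measurable_const, lintegral_const_mul' _ _ ha, setLIntegral_const]
  _ ≤ a * A + b * B := by gcongr

theorem mul_le_rpow_of_le_rpow_of_le_div {v w B C p t s : ℝ} (ht : 0 < t) (hs : 0 < s)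
    (hB : 0 ≤ B) (hv : v ≤ B * (t * s) ^ p) (hw₀ : 0 ≤ w) (hw : w ≤ C / s) :
    v * w ≤ B * C * t ^ p * s ^ (p - 1) := calc
  v * w ≤ B * (t * s) ^ p * (C / s) := mul_le_mul hv hw hw₀ (by positivity)
  _ = B * C * t ^ p * s ^ (p - 1) := by
    rw [Real.mul_rpow ht.le hs.le, Real.rpow_sub hs, Real.rpow_one]
    field_simp

theorem setIntegral_Ioc_le_of_le_rpow {h : ℝ → ℝ} {c δ a : ℝ} (hδ : 0 < δ) (ha : 0 ≤ a)
    (hh : IntegrableOn h (Ioc 0 a)) (hle : ∀ s ∈ Ioc 0 a, h s ≤ c * s ^ (δ - 1)) :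
    ∫ s in Ioc 0 a, h s ≤ c * (a ^ δ / δ) := calc
  ∫ s in Ioc 0 a, h s ≤ ∫ s in Ioc 0 a, c * s ^ (δ - 1) :=
    setIntegral_mono_on hh
      ((intervalIntegral.intervalIntegrable_rpow' (by linarith)).1.const_mul _)
      measurableSet_Ioc hle
  _ = c * (a ^ δ / δ) := by
    rw [integral_const_mul, ← intervalIntegral.integral_of_le ha,
      integral_rpow (Or.inl (by linarith)), sub_add_cancel, Real.zero_rpow hδ.ne', sub_zero]

theorem setIntegral_Ioi_le_of_le_rpow {h : ℝ → ℝ} {c q a : ℝ} (hq : 0 < q) (ha : 0 < a)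
    (hh : IntegrableOn h (Ioi a)) (hle : ∀ s ∈ Ioi a, h s ≤ c * s ^ (-q - 1)) :
    ∫ s in Ioi a, h s ≤ c * (a ^ (-q) / q) := by
  have hq₁ : -q - 1 < -1 := by linarith
  calc ∫ s in Ioi a, h s ≤ ∫ s in Ioi a, c * s ^ (-q - 1) :=
        setIntegral_mono_on hh ((integrableOn_Ioi_rpow_of_lt hq₁ ha).const_mul _)
          measurableSet_Ioi hle
    _ = c * (a ^ (-q) / q) := by
        rw [integral_const_mul, integral_Ioi_rpow_of_lt hq₁ ha, sub_add_cancel, neg_div_neg_eq]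

section Subordination

variable {φ g : ℝ → ℝ} {C A δ q R : ℝ}

theorem abs_setIntegral_comp_mul_le {M t : ℝ} (hδ : 0 < δ) (hq : 0 < q) (hR : 0 < R)
    (hA : 0 ≤ A) (hg₀ : ∀ s, 0 ≤ g s) (hg : ∀ s > 0, g s ≤ C / s)
    (hfar : ∀ u > 0, |φ u| ≤ A * u ^ (-q)) (hM : 0 ≤ M)
    (hnear : ∀ u, 0 < u → u ≤ R → |φ u| ≤ M * u ^ δ) (ht : 0 < t)
    (hint : IntegrableOn (fun s => φ (t * s) * g s) (Ioi 0)) :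
    |∫ s in Ioi 0, φ (t * s) * g s| ≤ C * R ^ δ / δ * M + A * C * R ^ (-q) / q := by
  set a := R / t
  have ha : 0 < a := div_pos hR ht
  have hpow : ∀ p : ℝ, t ^ p * a ^ p = R ^ p := fun p => by
    rw [← Real.mul_rpow ht.le ha.le, mul_div_cancel₀ R ht.ne']
  have habs_eq : ∀ s, |φ (t * s) * g s| = |φ (t * s)| * g s := fun s => by
    rw [abs_mul, abs_of_nonneg (hg₀ s)]
  have habs : IntegrableOn (fun s => |φ (t * s)| * g s) (Ioi 0) := by
    rw [← funext habs_eq]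
    exact hint.abs
  have hbelow : ∫ s in Ioc 0 a, |φ (t * s)| * g s ≤ M * C * t ^ δ * (a ^ δ / δ) := by
    refine setIntegral_Ioc_le_of_le_rpow hδ ha.le (habs.mono_set Ioc_subset_Ioi_self) ?_
    rintro s ⟨hs, hsa⟩
    have htsR : t * s ≤ R := (le_div_iff₀' ht).1 hsa
    exact mul_le_rpow_of_le_rpow_of_le_div ht hs hM (hnear _ (mul_pos ht hs) htsR) (hg₀ s)
      (hg s hs)
  have habove : ∫ s in Ioi a, |φ (t * s)| * g s ≤ A * C * t ^ (-q) * (a ^ (-q) / q) := by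
    refine setIntegral_Ioi_le_of_le_rpow hq ha (habs.mono_set (Ioi_subset_Ioi ha.le)) ?_
    intro s hs
    have hs₀ : 0 < s := ha.trans hs
    exact mul_le_rpow_of_le_rpow_of_le_div ht hs₀ hA (hfar _ (mul_pos ht hs₀)) (hg₀ s)
      (hg s hs₀)
  calc |∫ s in Ioi 0, φ (t * s) * g s| ≤ ∫ s in Ioi 0, |φ (t * s)| * g s := by
        rw [← funext habs_eq]
        exact abs_integral_le_integral_abs
    _ = (∫ s in Ioc 0 a, |φ (t * s)| * g s) + ∫ s in Ioi a, |φ (t * s)| * g s := by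
        rw [← setIntegral_union Ioc_disjoint_Ioi_same measurableSet_Ioi
          (habs.mono_set Ioc_subset_Ioi_self) (habs.mono_set (Ioi_subset_Ioi ha.le)),
          Ioc_union_Ioi_eq_Ioi ha.le]
    _ ≤ M * C * t ^ δ * (a ^ δ / δ) + A * C * t ^ (-q) * (a ^ (-q) / q) :=
        add_le_add hbelow habove
    _ = C * (t ^ δ * a ^ δ) / δ * M + A * C * (t ^ (-q) * a ^ (-q)) / q := by ring
    _ = C * R ^ δ / δ * M + A * C * R ^ (-q) / q := by rw [hpow, hpow]

theorem iSup_ofReal_abs_le_of_eq_setIntegral_comp_mul {k : ℝ → ℝ} (hC : 0 < C) (hδ : 0 < δ)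
    (hq : 0 < q) (hR : 0 < R) (hA : 0 ≤ A) (hg₀ : ∀ s, 0 ≤ g s) (hg : ∀ s > 0, g s ≤ C / s)
    (hfar : ∀ u > 0, |φ u| ≤ A * u ^ (-q))
    (hint : ∀ t > 0, IntegrableOn (fun s => φ (t * s) * g s) (Ioi 0))
    (hk : ∀ t > 0, k t = ∫ s in Ioi 0, φ (t * s) * g s) :
    ⨆ (t : ℝ) (_ : 0 < t) (_ : t ≤ R), ENNReal.ofReal |k t|
      ≤ ENNReal.ofReal (C * R ^ δ / δ) *
          (⨆ (u : ℝ) (_ : 0 < u) (_ : u ≤ R), ENNReal.ofReal (u ^ (-δ) * |φ u|))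
        + ENNReal.ofReal (A * C * R ^ (-q) / q) := by
  set F := ⨆ (u : ℝ) (_ : 0 < u) (_ : u ≤ R), ENNReal.ofReal (u ^ (-δ) * |φ u|)
  rcases eq_or_ne F ⊤ with hF | hF
  · rw [hF, ENNReal.mul_top (by positivity)]
    exact le_top.trans_eq (top_add _).symm
  have hnear : ∀ u, 0 < u → u ≤ R → |φ u| ≤ F.toReal * u ^ δ := by
    intro u hu huR
    have hle : u ^ (-δ) * |φ u| ≤ F.toReal :=
      (ENNReal.ofReal_le_iff_le_toReal hF).1 (le_iSup₂_of_le u hu (le_iSup_of_le huR le_rfl))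
    calc |φ u| = u ^ δ * (u ^ (-δ) * |φ u|) := by
          rw [← mul_assoc, ← Real.rpow_add hu, add_neg_cancel, Real.rpow_zero, one_mul]
      _ ≤ F.toReal * u ^ δ := by rw [mul_comm]; gcongr
  refine iSup₂_le fun t ht => iSup_le fun _ => ?_
  rw [hk t ht, ← ENNReal.ofReal_toReal hF, ← ENNReal.ofReal_mul (by positivity),
    ← ENNReal.ofReal_add (by positivity) (by positivity)]
  exact ENNReal.ofReal_le_ofReal <| abs_setIntegral_comp_mul_le hδ hq hR hA hg₀ hg hfar
    ENNReal.toReal_nonneg hnear ht (hint t ht)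

end Subordination

theorem stmt9_general (d : ℕ) (δ C₁ C₂ C₃ C₄ κ : ℝ) (hδ : δ ∈ Set.Ioo (0 : ℝ) 1)
    (hC₁ : 0 < C₁) (hC₂ : 0 < C₂) (hC₃ : 0 < C₃) (hC₄ : 0 < C₄) :
    ∃ C > 0,
      ∀ (X : Set (Rd d)), MeasurableSet X →
      ∀ T H : ℝ → Rd d → Rd d → ℝ,
        (Measurable fun p : ℝ × Rd d × Rd d => T p.1 p.2.1 p.2.2) →
        (Measurable fun p : ℝ × Rd d × Rd d => H p.1 p.2.1 p.2.2) →
        (∀ t x y, 0 ≤ T t x y) → (∀ t x y, 0 ≤ H t x y) →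
      ∀ (z : Rd d) (r : Fin d → ℝ), (∀ i, 0 < r i) →
        -- |Q^{**}| ≤ C₃ d_Q^d
        volume (cuboidSt X z r κ 2) ≤ ENNReal.ofReal (C₃ * diam (cuboid X z r) ^ d) →
        -- (i)
        (∀ u > 0, ∀ x ∈ X, ∀ y ∈ X, |T u x y - H u x y| ≤ C₁ * u ^ (-(d : ℝ) / 2)) →
        -- (ii)
        (∀ y ∈ cuboidSt X z r κ 1,
          (∫⁻ x in cuboidSt X z r κ 2,
              ⨆ (u : ℝ) (_ : 0 < u) (_ : u ≤ diam (cuboid X z r) ^ 2),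
                ENNReal.ofReal (u ^ (-δ) * |T u x y - H u x y|))
            ≤ ENNReal.ofReal (C₂ * diam (cuboid X z r) ^ (-(2 * δ)))) →
      ∀ g : ℝ → ℝ, Measurable g → (∀ s, 0 ≤ g s) →
        -- (iii)
        (∀ s > 0, g s ≤ C₄ / s) →
        (∀ t > 0, ∀ x ∈ X, ∀ y ∈ X,
          IntegrableOn (fun s => T (t * s) x y * g s) (Set.Ioi 0) volume) →
        (∀ t > 0, ∀ x ∈ X, ∀ y ∈ X,
          IntegrableOn (fun s => H (t * s) x y * g s) (Set.Ioi 0) volume) →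
      ∀ K P : ℝ → Rd d → Rd d → ℝ,
        (∀ t x y, K t x y = ∫ s in Set.Ioi (0 : ℝ), T (t * s) x y * g s) →
        (∀ t x y, P t x y = ∫ s in Set.Ioi (0 : ℝ), H (t * s) x y * g s) →
      ∀ y ∈ cuboidSt X z r κ 1,
        (∫⁻ x in cuboidSt X z r κ 2,
            ⨆ (t : ℝ) (_ : 0 < t) (_ : t ≤ diam (cuboid X z r) ^ 2),
              ENNReal.ofReal |K t x y - P t x y|)
          ≤ ENNReal.ofReal C := by
  obtain ⟨hδ₀, -⟩ := hδ
  refine ⟨C₂ * C₄ / δ + 2 * C₁ * C₃ * C₄ / d, by positivity, ?_⟩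
  intro X hX T H _ _ _ _ z r _ hvol hi hii g _ hg₀ hg hTint hHint K P hK hP y hy
  rcases (diam_nonneg (s := cuboid X z r)).eq_or_lt with hD | hD
  · simp +contextual [← hD, not_le_of_gt]
  have hd : (0 : ℝ) < d := Nat.cast_pos.2 (dim_pos_of_diam_pos hD)
  set D := diam (cuboid X z r)
  have hsup : ∀ x ∈ cuboidSt X z r κ 2, ⨆ (t : ℝ) (_ : 0 < t) (_ : t ≤ D ^ 2),
      ENNReal.ofReal |K t x y - P t x y|
        ≤ ENNReal.ofReal (C₄ * (D ^ 2) ^ δ / δ) *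
            (⨆ (u : ℝ) (_ : 0 < u) (_ : u ≤ D ^ 2),
              ENNReal.ofReal (u ^ (-δ) * |T u x y - H u x y|))
          + ENNReal.ofReal (C₁ * C₄ * (D ^ 2) ^ (-(d / 2 : ℝ)) / (d / 2)) := by
    intro x ⟨hx, _⟩
    have hTH : ∀ t > 0, IntegrableOn (fun s => T (t * s) x y * g s - H (t * s) x y * g s)
        (Ioi 0) := fun t ht => (hTint t ht x hx y hy.1).sub (hHint t ht x hx y hy.1)
    refine iSup_ofReal_abs_le_of_eq_setIntegral_comp_mul hC₄ hδ₀ (by positivity) (by positivity)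
      hC₁.le hg₀ hg (fun u hu => by rw [← neg_div]; exact hi u hu x hx y hy.1)
      (fun t ht => by simpa only [sub_mul] using hTH t ht) (fun t ht => ?_)
    rw [hK, hP, ← integral_sub (hTint t ht x hx y hy.1) (hHint t ht x hx y hy.1)]
    simp only [sub_mul]
  have hpow : ∀ p : ℝ, (D ^ 2) ^ p * D ^ (-(2 * p)) = 1 := fun p => by
    rw [← Real.rpow_natCast, ← Real.rpow_mul hD.le, ← Real.rpow_add hD]
    norm_num
  refine (setLIntegral_le_mul_add_mul (measurableSet_cuboid hX z _) ENNReal.ofReal_ne_top hsup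
    (hii y hy) hvol).trans_eq ?_
  rw [← ENNReal.ofReal_mul (by positivity), ← ENNReal.ofReal_mul (by positivity),
    ← ENNReal.ofReal_add (by positivity) (by positivity)]
  congr 1
  have hd_pow : D ^ d = D ^ (-(2 * -(d / 2 : ℝ))) := by rw [← Real.rpow_natCast]; ring_nf
  rw [hd_pow]
  linear_combination (C₂ * C₄ / δ) * hpow δ + (2 * C₁ * C₃ * C₄ / d) * hpow (-(d / 2))

/-- Subordination of the (A₂)-type estimate: if `|T_u − H_u| ≤ C₁ u^{−d/2}`,
the kernels satisfy the quantified (A₂) estimate on a cuboid `Q` with `|Q^{**}| ≤ C₃ d_Q^d`,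
and `g(s) ≤ C₄ s⁻¹`, then the subordinate kernels `K_t = ∫₀^∞ T_{ts} g(s) ds` and
`P_t = ∫₀^∞ H_{ts} g(s) ds` satisfy
`sup_{y∈Q^*} ∫_{Q^{**}} sup_{0<t≤d_Q²} |K_t − P_t| dx ≤ C`. -/
theorem stmt9 (d : ℕ) (δ C₁ C₂ C₃ C₄ κ : ℝ) (hδ : δ ∈ Set.Ioo (0 : ℝ) 1)
    (hC₁ : 0 < C₁) (hC₂ : 0 < C₂) (hC₃ : 0 < C₃) (hC₄ : 0 < C₄) (hκ : 1 < κ) :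
    ∃ C > 0,
      ∀ (X : Set (Rd d)), MeasurableSet X →
      ∀ T H : ℝ → Rd d → Rd d → ℝ,
        (Measurable fun p : ℝ × Rd d × Rd d => T p.1 p.2.1 p.2.2) →
        (Measurable fun p : ℝ × Rd d × Rd d => H p.1 p.2.1 p.2.2) →
        (∀ t x y, 0 ≤ T t x y) → (∀ t x y, 0 ≤ H t x y) →
      ∀ (z : Rd d) (r : Fin d → ℝ), (∀ i, 0 < r i) →
        -- |Q^{**}| ≤ C₃ d_Q^d
        volume (cuboidSt X z r κ 2) ≤ ENNReal.ofReal (C₃ * diam (cuboid X z r) ^ d) →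
        -- (i)
        (∀ u > 0, ∀ x ∈ X, ∀ y ∈ X, |T u x y - H u x y| ≤ C₁ * u ^ (-(d : ℝ) / 2)) →
        -- (ii)
        (∀ y ∈ cuboidSt X z r κ 1,
          (∫⁻ x in cuboidSt X z r κ 2,
              ⨆ (u : ℝ) (_ : 0 < u) (_ : u ≤ diam (cuboid X z r) ^ 2),
                ENNReal.ofReal (u ^ (-δ) * |T u x y - H u x y|))
            ≤ ENNReal.ofReal (C₂ * diam (cuboid X z r) ^ (-(2 * δ)))) →
      ∀ g : ℝ → ℝ, Measurable g → (∀ s, 0 ≤ g s) →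
        -- (iii)
        (∀ s > 0, g s ≤ C₄ / s) →
        (∀ t > 0, ∀ x ∈ X, ∀ y ∈ X,
          IntegrableOn (fun s => T (t * s) x y * g s) (Set.Ioi 0) volume) →
        (∀ t > 0, ∀ x ∈ X, ∀ y ∈ X,
          IntegrableOn (fun s => H (t * s) x y * g s) (Set.Ioi 0) volume) →
      ∀ K P : ℝ → Rd d → Rd d → ℝ,
        (∀ t x y, K t x y = ∫ s in Set.Ioi (0 : ℝ), T (t * s) x y * g s) →
        (∀ t x y, P t x y = ∫ s in Set.Ioi (0 : ℝ), H (t * s) x y * g s) →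
      ∀ y ∈ cuboidSt X z r κ 1,
        (∫⁻ x in cuboidSt X z r κ 2,
            ⨆ (t : ℝ) (_ : 0 < t) (_ : t ≤ diam (cuboid X z r) ^ 2),
              ENNReal.ofReal |K t x y - P t x y|)
          ≤ ENNReal.ofReal C :=
  stmt9_general d δ C₁ C₂ C₃ C₄ κ hδ hC₁ hC₂ hC₃ hC₄
end
end

section
/- Let T be a measurable kernel on (0,∞) × ℝ^d × ℝ^d satisfying: (i) 0 ≤ T_t(x,y) ≤ H_t(x,y) for all t > 0, x,y ∈ ℝ^d, where H_t is the classical heat kernel; (ii) the semigroup (Chapman–Kolmogorov) identity T_{t+s}(x,y) = ∫_{ℝ^d} T_t(x,u) T_s(u,y) du for all s,t > 0 and x,y ∈ ℝ^d. Let Q ⊆ ℝ^d be a cuboid whose half-sides satisfy r_i ≤ C₁ r_j, and suppose there exist ρ > 1 and C₀ > 0 such that sup_{y ∈ Q^*} ∫_{ℝ^d} T_{2^n d_Q²}(x,y) dx ≤ C₀ ρ^{−n} for all n ∈ ℕ. Then for every γ < log₂ ρ and every δ ∈ [0, γ) (with γ > 0) there is a constant C, depending only on d, ρ, C₀, C₁,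 κ, γ (and uniform in δ ∈ [0,γ)), such that sup_{y ∈ Q^*} ∫_{ℝ^d ∖ Q^{**}} sup_{t>0} t^δ T_t(x,y) dx ≤ C d_Q^{2δ}. -/
/-!
Split `t ^ δ T_t(x, y)` at the time `2 d_Q²`. For `x ∉ Q**` and `y ∈ Q*` we have
`|x - y| ≳ d_Q`, so for small times the Gaussian factor of `H_t` absorbs every power of `t`
and `t ^ δ T_t(x, y) ≲ d_Q^{2δ} H_{4 d_Q²}(x, y)`, whose integral in `x` is `≲ d_Q^{2δ}`.
A large time `t ∈ [2s, 4s]` with `s = 2ⁿ d_Q²` is split by Chapman–Kolmogorov as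
`T_t = T_{t-s} ∘ T_s` with `T_{t-s} ≤ H_{t-s} ≤ 2^d H_{4s}`; integrating first in `x`
leaves `(4s)^δ ∫ T_s(u, y) du ≲ (2^γ / ρ)ⁿ d_Q^{2δ}` by (D′), and these terms sum
because `2^γ < ρ`.
-/

open MeasureTheory Set Metric Filter
open scoped ENNReal NNReal

noncomputable section

open Real
open scoped Nat

lemma rpow_mul_exp_neg_le {a v : ℝ} {n : ℕ} (ha : 0 ≤ a) (han : a ≤ n) (hv : 0 ≤ v) :
    v ^ a * exp (-v) ≤ 1 + n ! := by
  have hpow : v ^ a ≤ 1 + v ^ n := by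
    rcases le_total v 1 with h | h
    · linarith [rpow_le_one hv h ha, pow_nonneg hv n]
    · linarith [rpow_natCast v n ▸ rpow_le_rpow_of_exponent_le h han]
  have hfact : v ^ n * exp (-v) ≤ n ! := by
    rw [exp_neg, ← div_eq_mul_inv, div_le_iff₀ (exp_pos v), mul_comm, ← div_le_iff₀ (by positivity)]
    exact pow_div_factorial_le_exp v hv n
  calc v ^ a * exp (-v) ≤ (1 + v ^ n) * exp (-v) := by gcongr
    _ = exp (-v) + v ^ n * exp (-v) := by ring
    _ ≤ 1 + n ! := add_le_add (exp_le_one_iff.2 (by linarith)) hfact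

lemma exists_two_pow_mul_le_and_le {a t : ℝ} (ha : 0 < a) (hat : a ≤ t) :
    ∃ n : ℕ, 2 ^ n * a ≤ t ∧ t ≤ 2 * (2 ^ n * a) := by
  obtain ⟨n, h₁, h₂⟩ := exists_nat_pow_near ((one_le_div ha).2 hat) one_lt_two
  refine ⟨n, (le_div_iff₀ ha).1 h₁, ?_⟩
  rw [div_lt_iff₀ ha, pow_succ] at h₂
  linarith

lemma rpow_four_mul_two_pow_mul_le {δ γ D : ℝ} (hδγ : δ ≤ γ) (hD : 0 < D) (n : ℕ) :
    (4 * (2 ^ n * D)) ^ δ ≤ 4 ^ γ * (2 ^ γ) ^ n * D ^ δ := by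
  rw [← mul_assoc, mul_rpow (by positivity) hD.le]
  gcongr
  calc (4 * 2 ^ n : ℝ) ^ δ ≤ (4 * 2 ^ n) ^ γ :=
        rpow_le_rpow_of_exponent_le (one_le_mul_of_one_le_of_one_le (by norm_num)
          (one_le_pow₀ one_le_two)) hδγ
    _ = 4 ^ γ * (2 ^ γ) ^ n := by
        rw [mul_rpow (by norm_num) (by positivity), rpow_pow_comm zero_le_two]

lemma tsum_ofReal_mul_pow {a q : ℝ} (ha : 0 ≤ a) (hq₀ : 0 ≤ q) (hq₁ : q < 1) :
    ∑' n : ℕ, ENNReal.ofReal (a * q ^ n) = ENNReal.ofReal (a / (1 - q)) := by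
  rw [← ENNReal.ofReal_tsum_of_nonneg (fun n => by positivity)
    ((summable_geometric_of_lt_one hq₀ hq₁).mul_left a), tsum_mul_left,
    tsum_geometric_of_lt_one hq₀ hq₁, div_eq_mul_inv]

lemma heatK_nonneg (d : ℕ) {t : ℝ} (ht : 0 ≤ t) (x y : Rd d) : 0 ≤ heatK d t x y := by
  unfold heatK; positivity

lemma continuous_heatK (d : ℕ) (t : ℝ) : Continuous fun p : Rd d × Rd d => heatK d t p.1 p.2 := by
  unfold heatK; fun_prop

lemma measurable_heatK_mul (d : ℕ) (τ : ℝ) {f : Rd d → ℝ≥0∞} (hf : Measurable f) :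
    Measurable fun p : Rd d × Rd d => ENNReal.ofReal (heatK d τ p.1 p.2) * f p.2 :=
  (continuous_heatK d τ).measurable.ennreal_ofReal.mul (hf.comp measurable_snd)

lemma lintegral_heatK (d : ℕ) {t : ℝ} (ht : 0 < t) (y : Rd d) :
    ∫⁻ x, ENNReal.ofReal (heatK d t x y) = 1 := by
  have hb : 0 < (4 * t)⁻¹ := by positivity
  have hgauss := GaussianFourier.integral_rexp_neg_mul_sq_norm (V := Rd d) hb
  have hint : Integrable fun v : Rd d => exp (-(4 * t)⁻¹ * ‖v‖ ^ 2) :=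
    .of_integral_ne_zero (by rw [hgauss]; positivity)
  have heq : (fun x => heatK d t x y) =
      fun x => (4 * π * t) ^ (-(d : ℝ) / 2) * exp (-(4 * t)⁻¹ * ‖x - y‖ ^ 2) := by
    ext x; rw [heatK, dist_eq_norm]; congr 2; ring
  rw [← ofReal_integral_eq_lintegral_ofReal, heq, integral_const_mul,
    integral_sub_right_eq_self (fun v => exp (-(4 * t)⁻¹ * ‖v‖ ^ 2)) y, hgauss,
    finrank_euclideanSpace_fin, div_inv_eq_mul, show π * (4 * t) = 4 * π * t by ring,
    ← rpow_add (by positivity), neg_div, neg_add_cancel, rpow_zero, ENNReal.ofReal_one]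
  · rw [heq]; exact (hint.comp_sub_right y).const_mul _
  · exact Eventually.of_forall fun x => by unfold heatK; positivity

lemma lintegral_ofReal_mul_heatK (d : ℕ) {t a : ℝ} (ht : 0 < t) (ha : 0 ≤ a) (y : Rd d) :
    ∫⁻ x, ENNReal.ofReal (a * heatK d t x y) = ENNReal.ofReal a := by
  simp_rw [ENNReal.ofReal_mul ha]
  rw [lintegral_const_mul' _ _ ENNReal.ofReal_ne_top, lintegral_heatK d ht, mul_one]

lemma lintegral_lintegral_heatK_mul (d : ℕ) {τ : ℝ} (hτ : 0 < τ) {f : Rd d → ℝ≥0∞}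
    (hf : Measurable f) :
    ∫⁻ x, ∫⁻ u, ENNReal.ofReal (heatK d τ x u) * f u = ∫⁻ u, f u := by
  rw [lintegral_lintegral_swap (measurable_heatK_mul d τ hf).aemeasurable]
  refine lintegral_congr fun u => ?_
  have hcont : Continuous fun x => heatK d τ x u := by unfold heatK; fun_prop
  rw [lintegral_mul_const _ hcont.measurable.ennreal_ofReal, lintegral_heatK d hτ u, one_mul]

lemma heatK_eq_rpow_mul_exp_mul_heatK (d : ℕ) {s t : ℝ} (hs : 0 < s) (ht : 0 < t) (x y : Rd d) :
    heatK d s x y = (t / s) ^ ((d : ℝ) / 2) *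
      exp (-(dist x y ^ 2 / (4 * s) - dist x y ^ 2 / (4 * t))) * heatK d t x y := by
  have hpre : (4 * π * s) ^ (-(d : ℝ) / 2) =
      (t / s) ^ ((d : ℝ) / 2) * (4 * π * t) ^ (-(d : ℝ) / 2) := by
    have hsplit : (4 * π * t) ^ ((d : ℝ) / 2) =
        (4 * π * s) ^ ((d : ℝ) / 2) * (t / s) ^ ((d : ℝ) / 2) := by
      rw [← mul_rpow (by positivity) (by positivity)]; congr 1; field_simp
    rw [neg_div, rpow_neg (by positivity), rpow_neg (by positivity), hsplit]
    field_simp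
  have hexp : exp (-dist x y ^ 2 / (4 * s)) = exp (-(dist x y ^ 2 / (4 * s) -
      dist x y ^ 2 / (4 * t))) * exp (-dist x y ^ 2 / (4 * t)) := by
    rw [← exp_add]; ring_nf
  rw [heatK, heatK, hpre, hexp]
  ring

lemma heatK_le_rpow_mul_heatK (d : ℕ) {a s t : ℝ} (ha : 0 < a) (has : a ≤ s) (hst : s ≤ t)
    (x y : Rd d) : heatK d s x y ≤ (t / a) ^ ((d : ℝ) / 2) * heatK d t x y := by
  have hs : 0 < s := ha.trans_le has
  have ht : 0 < t := hs.trans_le hst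
  rw [heatK_eq_rpow_mul_exp_mul_heatK d hs ht]
  have hexp : exp (-(dist x y ^ 2 / (4 * s) - dist x y ^ 2 / (4 * t))) ≤ 1 := by
    rw [exp_le_one_iff, neg_nonpos, sub_nonneg]
    gcongr
  calc _ ≤ (t / a) ^ ((d : ℝ) / 2) * 1 * heatK d t x y := by
        gcongr
        exact heatK_nonneg d ht.le x y
    _ = _ := by ring

lemma heatK_le_mul_heatK_two_mul (d : ℕ) {c s τ : ℝ} (hc : 0 < c) (hs : 0 < s) (hsτ : s ≤ τ)
    {x y : Rd d} (hxy : c * τ ≤ dist x y ^ 2) :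
    heatK d s x y ≤ (16 / c) ^ ((d : ℝ) / 2) * (1 + d !) * heatK d (2 * τ) x y := by
  have hτ : 0 < τ := hs.trans_le hsτ
  set v := c * τ / (8 * s) with hv
  have hratio : 2 * τ / s = 16 / c * v := by rw [hv]; field_simp; ring
  have hexp : exp (-(dist x y ^ 2 / (4 * s) - dist x y ^ 2 / (4 * (2 * τ)))) ≤ exp (-v) := by
    have h1 : dist x y ^ 2 / (4 * (2 * τ)) ≤ dist x y ^ 2 / (8 * s) :=
      div_le_div_of_nonneg_left (sq_nonneg _) (by positivity) (by linarith)
    have h2 : v ≤ dist x y ^ 2 / (8 * s) := div_le_div_of_nonneg_right hxy (by positivity)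
    have h3 : dist x y ^ 2 / (4 * s) = 2 * (dist x y ^ 2 / (8 * s)) := by field_simp; ring
    rw [exp_le_exp]
    linarith
  have hH := heatK_nonneg d (by positivity : 0 ≤ 2 * τ) x y
  -- the Gaussian gain `exp (-v)` pays for the prefactor `(16 / c * v) ^ (d / 2)`
  rw [heatK_eq_rpow_mul_exp_mul_heatK d hs (by positivity : 0 < 2 * τ), hratio,
    mul_rpow (by positivity) (by positivity)]
  calc _ = (16 / c) ^ ((d : ℝ) / 2) * (v ^ ((d : ℝ) / 2) *
        exp (-(dist x y ^ 2 / (4 * s) - dist x y ^ 2 / (4 * (2 * τ))))) * heatK d (2 * τ) x y := by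
        ring
    _ ≤ (16 / c) ^ ((d : ℝ) / 2) * (v ^ ((d : ℝ) / 2) * exp (-v)) * heatK d (2 * τ) x y := by
        gcongr
    _ ≤ _ := by
        gcongr
        exact rpow_mul_exp_neg_le (by positivity) (half_le_self (Nat.cast_nonneg d)) (by positivity)

lemma abs_sub_apply_le_dist {ι : Type*} [Fintype ι] (x y : EuclideanSpace ℝ ι) (i : ι) :
    |x i - y i| ≤ dist x y := by
  simpa [Real.dist_eq] using PiLp.dist_apply_le x y i

section Cuboid

variable {d : ℕ} {z : Rd d} {r : Fin d → ℝ} {C₁ : ℝ}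

lemma dist_le_of_mem_cuboid (hr : ∀ i, 0 < r i) (hcomp : ∀ i j, r i ≤ C₁ * r j) (j : Fin d)
    {x x' : Rd d} (hx : x ∈ cuboid univ z r) (hx' : x' ∈ cuboid univ z r) :
    dist x x' ≤ 2 * C₁ * r j * √d := by
  have hb : 0 ≤ 2 * C₁ * r j := by linarith [hr j, hcomp j j]
  have hcoord : ∀ i, dist (x i) (x' i) ≤ 2 * C₁ * r j := fun i => by
    rw [Real.dist_eq]
    linarith [hx.2 i, hx'.2 i, hcomp i j, abs_sub_le (x i) (z i) (x' i), abs_sub_comm (z i) (x' i)]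
  calc dist x x' = √(∑ i, dist (x i) (x' i) ^ 2) := EuclideanSpace.dist_eq x x'
    _ ≤ √(∑ _i : Fin d, (2 * C₁ * r j) ^ 2) := by gcongr with i; exact hcoord i
    _ = 2 * C₁ * r j * √d := by
        rw [Finset.sum_const, Finset.card_univ, Fintype.card_fin, nsmul_eq_mul, mul_comm,
          Real.sqrt_mul (sq_nonneg _), Real.sqrt_sq hb]

lemma diam_cuboid_le (hr : ∀ i, 0 < r i) (hcomp : ∀ i j, r i ≤ C₁ * r j) (j : Fin d) :
    diam (cuboid univ z r) ≤ 2 * C₁ * r j * √d :=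
  diam_le_of_forall_dist_le (by have := hcomp j j; nlinarith [hr j, Real.sqrt_nonneg d])
    fun _ hx _ hx' => dist_le_of_mem_cuboid hr hcomp j hx hx'

lemma diam_cuboid_pos (hr : ∀ i, 0 < r i) (hcomp : ∀ i j, r i ≤ C₁ * r j) (i₀ : Fin d) :
    0 < diam (cuboid univ z r) := by
  have hbdd : Bornology.IsBounded (cuboid univ z r) :=
    isBounded_iff.2 ⟨_, fun _ hx _ hx' => dist_le_of_mem_cuboid hr hcomp i₀ hx hx'⟩
  have hz : z ∈ cuboid univ z r := ⟨mem_univ _, fun i => by simpa using (hr i).le⟩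
  have hw : z + EuclideanSpace.single i₀ (r i₀) ∈ cuboid univ z r := by
    refine ⟨mem_univ _, fun i => ?_⟩
    by_cases h : i = i₀
    · subst h; simp [abs_of_pos (hr i)]
    · simp [h, (hr i).le]
  calc 0 < r i₀ := hr i₀
    _ = dist z (z + EuclideanSpace.single i₀ (r i₀)) := by
        simp [dist_eq_norm, PiLp.norm_single, abs_of_pos (hr i₀)]
    _ ≤ _ := dist_le_diam_of_mem hbdd hz hw

lemma mul_diam_cuboid_le_dist {κ : ℝ} (hr : ∀ i, 0 < r i) (hcomp : ∀ i j, r i ≤ C₁ * r j)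
    (hκ : 1 < κ) {x y : Rd d} (hy : y ∈ cuboidSt univ z r κ 1) (hx : x ∉ cuboidSt univ z r κ 2) :
    κ * (κ - 1) / (2 * C₁ * √d) * diam (cuboid univ z r) ≤ dist x y := by
  obtain ⟨i, hi⟩ : ∃ i, κ ^ 2 * r i < |x i - z i| := by simpa [cuboidSt, cuboid] using hx
  have hyi : |y i - z i| ≤ κ * r i := by simpa using hy.2 i
  have hsd : 0 < √(d : ℝ) := Real.sqrt_pos.2 (Nat.cast_pos.2 i.pos)
  have hC₁ : 0 < C₁ := by nlinarith [hr i, hcomp i i]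
  calc κ * (κ - 1) / (2 * C₁ * √d) * diam (cuboid univ z r)
      ≤ κ * (κ - 1) / (2 * C₁ * √d) * (2 * C₁ * r i * √d) := by
        have : 0 ≤ κ * (κ - 1) := by nlinarith
        gcongr
        exact diam_cuboid_le hr hcomp i
    _ = κ ^ 2 * r i - κ * r i := by field_simp
    _ ≤ |x i - y i| := by linarith [abs_sub_le (x i) (y i) (z i)]
    _ ≤ dist x y := abs_sub_apply_le_dist x y i

end Cuboid

structure IsHeatDominatedSemigroup (d : ℕ) (T : ℝ → Rd d → Rd d → ℝ) : Prop where
  measurable : Measurable fun p : ℝ × Rd d × Rd d => T p.1 p.2.1 p.2.2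
  nonneg : ∀ t > 0, ∀ x y, 0 ≤ T t x y
  le_heatK : ∀ t > 0, ∀ x y, T t x y ≤ heatK d t x y
  chapman_kolmogorov : ∀ s > 0, ∀ t > 0, ∀ x y, T (t + s) x y = ∫ u, T t x u * T s u y

def dyadicMajorant (d : ℕ) (T : ℝ → Rd d → Rd d → ℝ) (δ s : ℝ) (x y : Rd d) : ℝ≥0∞ :=
  ENNReal.ofReal ((4 * s) ^ δ) * 2 ^ d *
    ∫⁻ u, ENNReal.ofReal (heatK d (4 * s) x u) * ENNReal.ofReal (T s u y)

namespace IsHeatDominatedSemigroup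

variable {d : ℕ} {T : ℝ → Rd d → Rd d → ℝ}

lemma measurable_apply_left (hT : IsHeatDominatedSemigroup d T) (t : ℝ) (y : Rd d) :
    Measurable fun u => T t u y :=
  hT.measurable.comp (measurable_const.prodMk (measurable_id.prodMk measurable_const))

lemma ofReal_le_two_pow_mul_lintegral (hT : IsHeatDominatedSemigroup d T) {s t : ℝ} (hs : 0 < s)
    (hst : 2 * s ≤ t) (hts : t ≤ 4 * s) (x y : Rd d) :
    ENNReal.ofReal (T t x y) ≤
      2 ^ d * ∫⁻ u, ENNReal.ofReal (heatK d (4 * s) x u) * ENNReal.ofReal (T s u y) := by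
  have hts' : 0 < t - s := by linarith
  have hCK : T t x y = ∫ u, T (t - s) x u * T s u y := by
    simpa using hT.chapman_kolmogorov s hs (t - s) hts' x y
  have hcomp : ∀ u, T (t - s) x u ≤ 2 ^ d * heatK d (4 * s) x u := fun u =>
    calc T (t - s) x u ≤ heatK d (t - s) x u := hT.le_heatK _ hts' x u
      _ ≤ (4 * s / s) ^ ((d : ℝ) / 2) * heatK d (4 * s) x u :=
          heatK_le_rpow_mul_heatK d hs (by linarith) (by linarith) x u
      _ = 2 ^ d * heatK d (4 * s) x u := by
          rw [mul_div_assoc, div_self hs.ne', mul_one, show (4 : ℝ) = 2 ^ (2 : ℝ) by norm_num,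
            ← rpow_mul zero_le_two, mul_div_cancel₀ _ two_ne_zero, rpow_natCast]
  calc ENNReal.ofReal (T t x y) ≤ ∫⁻ u, ENNReal.ofReal (T (t - s) x u * T s u y) := by
        rw [hCK]
        refine (Real.ofReal_le_enorm _).trans ((enorm_integral_le_lintegral_enorm _).trans_eq ?_)
        exact lintegral_congr fun u =>
          Real.enorm_eq_ofReal (mul_nonneg (hT.nonneg _ hts' x u) (hT.nonneg s hs u y))
    _ ≤ ∫⁻ u, 2 ^ d * (ENNReal.ofReal (heatK d (4 * s) x u) * ENNReal.ofReal (T s u y)) := by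
        refine lintegral_mono fun u => ?_
        rw [ENNReal.ofReal_mul (hT.nonneg _ hts' x u), ← mul_assoc]
        gcongr
        calc ENNReal.ofReal (T (t - s) x u) ≤ ENNReal.ofReal (2 ^ d * heatK d (4 * s) x u) :=
              ENNReal.ofReal_le_ofReal (hcomp u)
          _ = 2 ^ d * ENNReal.ofReal (heatK d (4 * s) x u) := by
              rw [ENNReal.ofReal_mul (by positivity)]; simp
    _ = _ := lintegral_const_mul' _ _ (by simp)

lemma rpow_mul_le_of_le_two_mul (hT : IsHeatDominatedSemigroup d T) {c D δ γ : ℝ} (hc : 0 < c)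
    (hδ : 0 ≤ δ) (hδγ : δ ≤ γ) {x y : Rd d} (hxy : c * D ≤ dist x y ^ 2) {t : ℝ} (ht : 0 < t)
    (htD : t ≤ 2 * D) :
    t ^ δ * T t x y ≤
      2 ^ γ * (32 / c) ^ ((d : ℝ) / 2) * (1 + d !) * D ^ δ * heatK d (4 * D) x y := by
  have hD : 0 < D := by linarith
  have htδ : t ^ δ ≤ 2 ^ γ * D ^ δ :=
    calc t ^ δ ≤ (2 * D) ^ δ := rpow_le_rpow ht.le htD hδ
      _ = 2 ^ δ * D ^ δ := mul_rpow zero_le_two hD.le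
      _ ≤ 2 ^ γ * D ^ δ := by gcongr; norm_num
  have hTt : T t x y ≤ (32 / c) ^ ((d : ℝ) / 2) * (1 + d !) * heatK d (4 * D) x y := by
    have hH := heatK_le_mul_heatK_two_mul d (half_pos hc) ht htD (x := x) (y := y) (by linarith)
    rw [show 16 / (c / 2) = 32 / c by field_simp; norm_num, show 2 * (2 * D) = 4 * D by ring] at hH
    exact (hT.le_heatK t ht x y).trans hH
  calc t ^ δ * T t x y
      ≤ 2 ^ γ * D ^ δ * ((32 / c) ^ ((d : ℝ) / 2) * (1 + d !) * heatK d (4 * D) x y) :=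
        mul_le_mul htδ hTt (hT.nonneg t ht x y) (by positivity)
    _ = _ := by ring

lemma ofReal_rpow_mul_le_dyadicMajorant (hT : IsHeatDominatedSemigroup d T) {δ s t : ℝ}
    (hδ : 0 ≤ δ) (hs : 0 < s) (hst : 2 * s ≤ t) (hts : t ≤ 4 * s) (x y : Rd d) :
    ENNReal.ofReal (t ^ δ * T t x y) ≤ dyadicMajorant d T δ s x y := by
  have ht : 0 ≤ t := by linarith
  rw [dyadicMajorant, ENNReal.ofReal_mul (rpow_nonneg ht δ), mul_assoc]
  gcongr
  exact hT.ofReal_le_two_pow_mul_lintegral hs hst hts x y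

lemma measurable_dyadicMajorant (hT : IsHeatDominatedSemigroup d T) (δ s : ℝ) (y : Rd d) :
    Measurable fun x => dyadicMajorant d T δ s x y :=
  (measurable_heatK_mul d _ (hT.measurable_apply_left s y).ennreal_ofReal
    |>.lintegral_prod_right').const_mul _

lemma lintegral_dyadicMajorant_le (hT : IsHeatDominatedSemigroup d T) {D δ γ ρ C₀ : ℝ}
    (hD : 0 < D) (hδγ : δ ≤ γ) (hρ : 0 < ρ) (hC₀ : 0 ≤ C₀) {y : Rd d} {n : ℕ}
    (hdecay : ∫⁻ x, ENNReal.ofReal (T (2 ^ n * D) x y) ≤ ENNReal.ofReal (C₀ * ρ ^ (-(n : ℝ)))) :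
    ∫⁻ x, dyadicMajorant d T δ (2 ^ n * D) x y ≤
      ENNReal.ofReal (2 ^ d * 4 ^ γ * C₀ * D ^ δ * (2 ^ γ / ρ) ^ n) := by
  have hscalar : (4 * (2 ^ n * D)) ^ δ * 2 ^ d * (C₀ * ρ ^ (-(n : ℝ))) ≤
      2 ^ d * 4 ^ γ * C₀ * D ^ δ * (2 ^ γ / ρ) ^ n := by
    rw [rpow_neg hρ.le, rpow_natCast]
    calc _ ≤ 4 ^ γ * (2 ^ γ) ^ n * D ^ δ * 2 ^ d * (C₀ * (ρ ^ n)⁻¹) := by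
          gcongr; exact rpow_four_mul_two_pow_mul_le hδγ hD n
      _ = _ := by rw [div_pow]; ring
  simp only [dyadicMajorant]
  rw [lintegral_const_mul' _ _ (ENNReal.mul_ne_top ENNReal.ofReal_ne_top (by simp)),
    lintegral_lintegral_heatK_mul d (by positivity) (hT.measurable_apply_left _ y).ennreal_ofReal]
  calc _ ≤ ENNReal.ofReal ((4 * (2 ^ n * D)) ^ δ) * 2 ^ d *
        ENNReal.ofReal (C₀ * ρ ^ (-(n : ℝ))) := by
        gcongr
    _ = ENNReal.ofReal ((4 * (2 ^ n * D)) ^ δ * 2 ^ d * (C₀ * ρ ^ (-(n : ℝ)))) := by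
        conv_rhs => rw [ENNReal.ofReal_mul (by positivity), ENNReal.ofReal_mul (by positivity),
          ENNReal.ofReal_pow zero_le_two, ENNReal.ofReal_ofNat]
    _ ≤ _ := ENNReal.ofReal_le_ofReal hscalar

lemma iSup_rpow_mul_le (hT : IsHeatDominatedSemigroup d T) {c D δ γ : ℝ} (hc : 0 < c) (hD : 0 < D)
    (hδ : 0 ≤ δ) (hδγ : δ ≤ γ) {x y : Rd d} (hxy : c * D ≤ dist x y ^ 2) :
    ⨆ (t : ℝ) (_ : 0 < t), ENNReal.ofReal (t ^ δ * T t x y) ≤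
      ENNReal.ofReal (2 ^ γ * (32 / c) ^ ((d : ℝ) / 2) * (1 + d !) * D ^ δ * heatK d (4 * D) x y) +
      ∑' n : ℕ, dyadicMajorant d T δ (2 ^ n * D) x y := by
  refine iSup₂_le fun t ht => ?_
  rcases le_or_gt t (2 * D) with htD | htD
  · exact le_add_right <|
      ENNReal.ofReal_le_ofReal (hT.rpow_mul_le_of_le_two_mul hc hδ hδγ hxy ht htD)
  obtain ⟨n, hn₁, hn₂⟩ := exists_two_pow_mul_le_and_le (by positivity : 0 < 2 * D) htD.le
  refine le_add_left ((hT.ofReal_rpow_mul_le_dyadicMajorant hδ (by positivity) ?_ ?_ x y).trans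
    (ENNReal.le_tsum n)) <;> linarith

theorem lintegral_iSup_rpow_mul_le (hT : IsHeatDominatedSemigroup d T) {c D δ γ ρ C₀ : ℝ}
    (hc : 0 < c) (hD : 0 < D) (hδ : 0 ≤ δ) (hδγ : δ ≤ γ) (hρ : 2 ^ γ < ρ) (hC₀ : 0 ≤ C₀) {y : Rd d}
    (hdecay : ∀ n : ℕ,
      ∫⁻ x, ENNReal.ofReal (T (2 ^ n * D) x y) ≤ ENNReal.ofReal (C₀ * ρ ^ (-(n : ℝ)))) :
    ∫⁻ x in {x | c * D ≤ dist x y ^ 2}, ⨆ (t : ℝ) (_ : 0 < t), ENNReal.ofReal (t ^ δ * T t x y) ≤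
      ENNReal.ofReal ((2 ^ γ * (32 / c) ^ ((d : ℝ) / 2) * (1 + d !) +
        2 ^ d * 4 ^ γ * C₀ / (1 - 2 ^ γ / ρ)) * D ^ δ) := by
  set K := 2 ^ γ * (32 / c) ^ ((d : ℝ) / 2) * (1 + d !)
  set A := 2 ^ d * 4 ^ γ * C₀ * D ^ δ
  set q := 2 ^ γ / ρ
  have hρ₀ : 0 < ρ := (rpow_pos_of_pos two_pos γ).trans hρ
  have hq₀ : 0 ≤ q := by positivity
  have hq₁ : q < 1 := (div_lt_one hρ₀).2 hρ
  have hsmall_meas : Measurable fun x => ENNReal.ofReal (K * D ^ δ * heatK d (4 * D) x y) := by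
    unfold heatK; fun_prop
  have hS : MeasurableSet {x | c * D ≤ dist x y ^ 2} :=
    measurableSet_le measurable_const ((continuous_id.dist continuous_const).pow 2).measurable
  calc _ ≤ ∫⁻ x in {x | c * D ≤ dist x y ^ 2}, ENNReal.ofReal (K * D ^ δ * heatK d (4 * D) x y) +
        ∑' n : ℕ, dyadicMajorant d T δ (2 ^ n * D) x y :=
        setLIntegral_mono' hS fun x hx => hT.iSup_rpow_mul_le hc hD hδ hδγ hx
    _ ≤ ∫⁻ x, _ := setLIntegral_le_lintegral _ _
    _ = ENNReal.ofReal (K * D ^ δ) + ∑' n : ℕ, ∫⁻ x, dyadicMajorant d T δ (2 ^ n * D) x y := by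
        rw [lintegral_add_left hsmall_meas,
          lintegral_tsum fun n => (hT.measurable_dyadicMajorant δ _ y).aemeasurable,
          lintegral_ofReal_mul_heatK d (by positivity) (by positivity)]
    _ ≤ ENNReal.ofReal (K * D ^ δ) + ∑' n : ℕ, ENNReal.ofReal (A * q ^ n) := by
        gcongr with n
        exact hT.lintegral_dyadicMajorant_le hD hδγ hρ₀ hC₀ (hdecay n)
    _ = _ := by
        rw [tsum_ofReal_mul_pow (by positivity) hq₀ hq₁,
          ← ENNReal.ofReal_add (by positivity) (by positivity)]
        congr 1; ring

end IsHeatDominatedSemigroup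

theorem stmt13_general (d : ℕ) (ρ C₀ C₁ κ γ : ℝ) (hρ : 1 < ρ) (hC₀ : 0 < C₀) (hC₁ : 0 < C₁)
    (hκ : 1 < κ) (hγ : γ < Real.logb 2 ρ) :
    ∃ C > 0,
      ∀ T : ℝ → Rd d → Rd d → ℝ,
        (Measurable fun p : ℝ × Rd d × Rd d => T p.1 p.2.1 p.2.2) →
        -- (i) 0 ≤ T_t ≤ H_t
        (∀ t > 0, ∀ x y : Rd d, 0 ≤ T t x y ∧ T t x y ≤ heatK d t x y) →
        -- (ii) Chapman–Kolmogorov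
        (∀ s > 0, ∀ t > 0, ∀ x y : Rd d,
          T (t + s) x y = ∫ u, T t x u * T s u y) →
      ∀ (z : Rd d) (r : Fin d → ℝ), (∀ i, 0 < r i) → (∀ i j, r i ≤ C₁ * r j) →
        -- the decay condition (D′)
        (∀ n : ℕ, ∀ y ∈ cuboidSt univ z r κ 1,
          (∫⁻ x, ENNReal.ofReal
              (T ((2 : ℝ) ^ n * diam (cuboid univ z r) ^ 2) x y))
            ≤ ENNReal.ofReal (C₀ * ρ ^ (-(n : ℝ)))) →
      ∀ δ : ℝ, 0 ≤ δ → δ < γ →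
      ∀ y ∈ cuboidSt univ z r κ 1,
        (∫⁻ x in univ \ cuboidSt univ z r κ 2,
            ⨆ (t : ℝ) (_ : 0 < t), ENNReal.ofReal (t ^ δ * T t x y))
          ≤ ENNReal.ofReal (C * diam (cuboid univ z r) ^ (2 * δ)) := by
  have h2γ : (2 : ℝ) ^ γ < ρ :=
    calc (2 : ℝ) ^ γ < 2 ^ logb 2 ρ := rpow_lt_rpow_of_exponent_lt one_lt_two hγ
      _ = ρ := rpow_logb two_pos (by norm_num) (by linarith)
  set c := (κ * (κ - 1) / (2 * C₁ * √d)) ^ 2 with hc_def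
  refine ⟨2 ^ γ * (32 / c) ^ ((d : ℝ) / 2) * (1 + d !) + 2 ^ d * 4 ^ γ * C₀ / (1 - 2 ^ γ / ρ),
    ?_, ?_⟩
  · have : 0 < 1 - 2 ^ γ / ρ := sub_pos.2 ((div_lt_one (by linarith)).2 h2γ)
    have : 0 ≤ (32 / c) ^ ((d : ℝ) / 2) := rpow_nonneg (by positivity) _
    positivity
  intro T hmeas hT hCK z r hr hcomp hdecay δ hδ hδγ y hy
  obtain hempty | ⟨x₀, -, hx₀⟩ := (univ \ cuboidSt univ z r κ 2).eq_empty_or_nonempty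
  · simp [hempty]
  obtain ⟨i, -⟩ : ∃ i, κ ^ 2 * r i < |x₀ i - z i| := by simpa [cuboidSt, cuboid] using hx₀
  have hQ := diam_cuboid_pos (z := z) hr hcomp i
  have hc : 0 < c := pow_pos (div_pos (mul_pos (by linarith) (by linarith))
    (mul_pos (by positivity) (Real.sqrt_pos.2 (Nat.cast_pos.2 i.pos)))) 2
  have hsub : univ \ cuboidSt univ z r κ 2 ⊆ {x | c * diam (cuboid univ z r) ^ 2 ≤ dist x y ^ 2} :=
    fun x hx => by
      rw [mem_ofPred_eq, hc_def, ← mul_pow]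
      exact pow_le_pow_left₀ (by positivity) (mul_diam_cuboid_le_dist hr hcomp hκ hy hx.2) 2
  have hT' : IsHeatDominatedSemigroup d T :=
    ⟨hmeas, fun t ht x y => (hT t ht x y).1, fun t ht x y => (hT t ht x y).2, hCK⟩
  calc _ ≤ _ := lintegral_mono_set hsub
    _ ≤ _ := hT'.lintegral_iSup_rpow_mul_le hc (pow_pos hQ 2) hδ hδγ.le h2γ hC₀.le (hdecay · y hy)
    _ = _ := by rw [← rpow_natCast_mul hQ.le 2 δ, Nat.cast_ofNat]

/-- (A₁)-type estimate for Schrödinger semigroups: if `0 ≤ T_t ≤ H_t`,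
`T` satisfies the Chapman–Kolmogorov identity, and `Q ⊆ ℝ^d` is a cuboid with comparable
half-sides satisfying the decay condition (D′) (`∫ T_{2ⁿ d_Q²}(·,y) ≤ C₀ ρ^{−n}` for
`y ∈ Q^*`), then for `0 < γ < log₂ ρ` there is `C` with
`sup_{y∈Q^*} ∫_{ℝ^d∖Q^{**}} sup_{t>0} t^δ T_t(x,y) dx ≤ C d_Q^{2δ}` for all `δ ∈ [0,γ)`. -/
theorem stmt13 (d : ℕ) (ρ C₀ C₁ κ γ : ℝ) (hρ : 1 < ρ) (hC₀ : 0 < C₀) (hC₁ : 0 < C₁)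
    (hκ : 1 < κ) (hγpos : 0 < γ) (hγ : γ < Real.logb 2 ρ) :
    ∃ C > 0,
      ∀ T : ℝ → Rd d → Rd d → ℝ,
        (Measurable fun p : ℝ × Rd d × Rd d => T p.1 p.2.1 p.2.2) →
        -- (i) 0 ≤ T_t ≤ H_t
        (∀ t > 0, ∀ x y : Rd d, 0 ≤ T t x y ∧ T t x y ≤ heatK d t x y) →
        -- (ii) Chapman–Kolmogorov
        (∀ s > 0, ∀ t > 0, ∀ x y : Rd d,
          T (t + s) x y = ∫ u, T t x u * T s u y) →
      ∀ (z : Rd d) (r : Fin d → ℝ), (∀ i, 0 < r i) → (∀ i j, r i ≤ C₁ * r j) →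
        -- the decay condition (D′)
        (∀ n : ℕ, ∀ y ∈ cuboidSt univ z r κ 1,
          (∫⁻ x, ENNReal.ofReal
              (T ((2 : ℝ) ^ n * diam (cuboid univ z r) ^ 2) x y))
            ≤ ENNReal.ofReal (C₀ * ρ ^ (-(n : ℝ)))) →
      ∀ δ : ℝ, 0 ≤ δ → δ < γ →
      ∀ y ∈ cuboidSt univ z r κ 1,
        (∫⁻ x in univ \ cuboidSt univ z r κ 2,
            ⨆ (t : ℝ) (_ : 0 < t), ENNReal.ofReal (t ^ δ * T t x y))
          ≤ ENNReal.ofReal (C * diam (cuboid univ z r) ^ (2 * δ)) :=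
  stmt13_general d ρ C₀ C₁ κ γ hρ hC₀ hC₁ hκ hγ
end
end

section
/- Let X ⊆ ℝ^d be a measurable set and let T be a measurable kernel on (0,∞) × X × X satisfying: (i) 0 ≤ T_t(x,y) ≤ C₀ t^ν (t + |x−y|²)^{−d/2−ν} for some C₀ > 0, ν ∈ (0,1); (ii) for every f ∈ L²(X), T_t f → f in L²(X) as t → 0⁺, where T_t f(x) = ∫_X T_t(x,y) f(y) dy. Then there exists a sequence t_n → 0⁺ such that for almost every x ∈ X and every r > 0: lim_{n→∞} ∫_{{y∈X : |x−y| > r}} T_{t_n}(x,y) dy = 0 and lim_{n→∞} ∫_{{y∈X : |x−y| ≤ r}} T_{t_n}(x,y) dy = 1. -/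
open MeasureTheory Set Metric Filter
open scoped ENNReal NNReal

noncomputable section

open scoped Topology

/-!
By the off-diagonal bound (i), the mass of `T_t(x, ·)` outside any ball around `x` is
`O(t^ν)`, uniformly in `x ∈ X`. Strong continuity, applied to the indicators of the balls
`B(0, m)`, gives `T_t 1_{B(0,m)} → 1_{B(0,m)}` in measure, and a diagonal Borel–Cantelli
selection produces one sequence `t_n` along which all of them converge a.e. At such an `x`, the
mass of `T_{t_n}(x, ·)` on a ball `B(0, m)` containing `B(x, 1)` tends to `1`, while the mass far
from `x` tends to `0`; this squeezes the mass near `x` to `1`.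
-/

theorem rpow_add_sq_le_mul_one_add_rpow {t D r s : ℝ} (ht : 0 ≤ t) (hr : 0 < r) (hrD : r < D)
    (hs : 0 ≤ s) : (t + D ^ 2) ^ (-s / 2) ≤ (r / (r + 1)) ^ (-s) * (1 + D) ^ (-s) := by
  have hD : 0 < D := hr.trans hrD
  have hbase : r / (r + 1) * (1 + D) ≤ D := by
    rw [div_mul_eq_mul_div, div_le_iff₀ (by linarith)]
    nlinarith
  calc (t + D ^ 2) ^ (-s / 2) ≤ (D ^ 2) ^ (-s / 2) :=
        Real.rpow_le_rpow_of_nonpos (by positivity) (by linarith) (by linarith)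
    _ = D ^ (-s) := by
        rw [← Real.rpow_natCast, ← Real.rpow_mul hD.le]
        ring_nf
    _ ≤ (r / (r + 1) * (1 + D)) ^ (-s) :=
        Real.rpow_le_rpow_of_nonpos (by positivity) hbase (by linarith)
    _ = (r / (r + 1)) ^ (-s) * (1 + D) ^ (-s) := Real.mul_rpow (by positivity) (by positivity)

theorem mul_rpow_add_sq_le {C t ν a D : ℝ} (hC : 0 ≤ C) (ht : 0 < t) (ha : a ≤ 0) :
    C * t ^ ν * (t + D ^ 2) ^ a ≤ C * t ^ ν * t ^ a :=
  mul_le_mul_of_nonneg_left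
    (Real.rpow_le_rpow_of_nonpos ht (le_add_of_nonneg_right (sq_nonneg D)) ha)
    (mul_nonneg hC (Real.rpow_nonneg ht.le ν))

namespace MeasureTheory

variable {α ι : Type*} [MeasurableSpace α] {μ : Measure α}

theorem ae_tendsto_of_tsum_measure_ne_top {E : Type*} [PseudoEMetricSpace E] {f : ℕ → α → E}
    {g : α → E} {ε : ℕ → ℝ≥0∞} (hε : Tendsto ε atTop (𝓝 0))
    (hsum : ∑' n, μ {x | ε n ≤ edist (f n x) (g x)} ≠ ∞) :
    ∀ᵐ x ∂μ, Tendsto (fun n => f n x) atTop (𝓝 (g x)) := by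
  filter_upwards [ae_eventually_notMem hsum] with x hx
  refine tendsto_iff_edist_tendsto_0.2 <| tendsto_of_tendsto_of_tendsto_of_le_of_le'
    tendsto_const_nhds hε (.of_forall fun _ => zero_le) ?_
  filter_upwards [hx] with n hn
  exact (not_le.1 hn).le

theorem exists_seq_forall_tendsto_ae_of_tendstoInMeasure {E : Type*} [PseudoEMetricSpace E]
    {l : Filter ι} [l.NeBot] [l.IsCountablyGenerated] {f : ℕ → ι → α → E} {g : ℕ → α → E}
    (hfg : ∀ m, TendstoInMeasure μ (f m) l (g m)) {s : Set ι} (hs : s ∈ l) :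
    ∃ ns : ℕ → ι, (∀ n, ns n ∈ s) ∧ Tendsto ns atTop l ∧
      ∀ᵐ x ∂μ, ∀ m, Tendsto (fun n => f m (ns n) x) atTop (𝓝 (g m x)) := by
  obtain ⟨u, hu⟩ := l.exists_antitone_basis
  have hsmall : ∀ n, ∀ᶠ i in l, ∀ m ∈ Iic n,
      μ {x | 2⁻¹ ^ n ≤ edist (f m i x) (g m x)} ≤ 2⁻¹ ^ n := fun n =>
    (eventually_all_finite (finite_Iic n)).2 fun m _ =>
      ENNReal.tendsto_nhds_zero.1 (hfg m _ (ENNReal.pow_pos (by simp) n)) _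
        (ENNReal.pow_pos (by simp) n)
  choose ns hns hns_u hns_s using fun n =>
    ((hsmall n).and ((show ∀ᶠ i in l, i ∈ u n from hu.mem n).and hs)).exists
  refine ⟨ns, hns_s, hu.tendsto hns_u, ae_all_iff.2 fun m => ?_⟩
  -- the family `m` is controlled only from step `m` on
  have hshift : ∀ᵐ x ∂μ, Tendsto (fun n => f m (ns (n + m)) x) atTop (𝓝 (g m x)) := by
    refine ae_tendsto_of_tsum_measure_ne_top (ε := fun n => 2⁻¹ ^ (n + m)) ?_ ?_
    · exact (ENNReal.tendsto_pow_atTop_nhds_zero_of_lt_one (by norm_num)).comp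
        (tendsto_add_atTop_nat m)
    · refine ne_top_of_le_ne_top ?_ (ENNReal.tsum_le_tsum fun n =>
        (hns (n + m) m (by simp)).trans (pow_le_pow_right_of_le_one' (by norm_num) le_self_add))
      simp [ENNReal.tsum_geometric, ENNReal.one_sub_inv_two]
  filter_upwards [hshift] with x hx
  exact (tendsto_add_atTop_iff_nat m).1 hx

theorem stronglyMeasurable_setIntegral_mul {β : Type*} [MeasurableSpace β] {ν : Measure β}
    [SFinite ν] {K : α → β → ℝ} (hK : Measurable fun p : α × β => K p.1 p.2) {g : β → ℝ}
    (hg : Measurable g) (X : Set β) :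
    StronglyMeasurable fun x => ∫ y in X, K x y * g y ∂ν :=
  (hK.mul (hg.comp measurable_snd)).stronglyMeasurable.integral_prod_right'

theorem ofReal_setIntegral_mul_indicator_one {X B : Set α} (hX : MeasurableSet X)
    (hB : MeasurableSet B) (hμB : μ B ≠ ∞) {T : α → ℝ} (hT : Measurable T) {M : ℝ}
    (hTX : ∀ y ∈ X, 0 ≤ T y ∧ T y ≤ M) :
    ENNReal.ofReal (∫ y in X, T y * B.indicator 1 y ∂μ) =
      ∫⁻ y in B ∩ X, ENNReal.ofReal (T y) ∂μ := by
  have hBX : MeasurableSet (B ∩ X) := hB.inter hX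
  have hint : IntegrableOn T (B ∩ X) μ := by
    refine Measure.integrableOn_of_bounded (M := M)
      (measure_ne_top_of_subset inter_subset_left hμB) hT.aestronglyMeasurable ?_
    filter_upwards [ae_restrict_mem hBX] with y hy
    rw [Real.norm_of_nonneg (hTX y hy.2).1]
    exact (hTX y hy.2).2
  have hnonneg : 0 ≤ᵐ[μ.restrict (B ∩ X)] T := by
    filter_upwards [ae_restrict_mem hBX] with y hy
    exact (hTX y hy.2).1
  have hind : (fun y => T y * B.indicator 1 y) = B.indicator T := by
    ext y
    by_cases hy : y ∈ B <;> simp [hy]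
  rw [hind, integral_indicator hB, Measure.restrict_restrict hB,
    ofReal_integral_eq_lintegral_ofReal hint hnonneg]

theorem tendsto_setLIntegral_of_subset_union {F : ι → α → ℝ≥0∞} {l : Filter ι} {c : ℝ≥0∞}
    {A A' B B' : Set α} (hBA : B ⊆ A ∪ A') (hAB : A ⊆ B ∪ B')
    (hB : Tendsto (fun i => ∫⁻ y in B, F i y ∂μ) l (𝓝 c))
    (hA' : Tendsto (fun i => ∫⁻ y in A', F i y ∂μ) l (𝓝 0))
    (hB' : Tendsto (fun i => ∫⁻ y in B', F i y ∂μ) l (𝓝 0)) :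
    Tendsto (fun i => ∫⁻ y in A, F i y ∂μ) l (𝓝 c) := by
  have hlower : Tendsto (fun i => (∫⁻ y in B, F i y ∂μ) - ∫⁻ y in A', F i y ∂μ) l (𝓝 c) := by
    simpa using ENNReal.Tendsto.sub hB hA' (Or.inr ENNReal.zero_ne_top)
  have hupper : Tendsto (fun i => (∫⁻ y in B, F i y ∂μ) + ∫⁻ y in B', F i y ∂μ) l (𝓝 c) := by
    simpa using hB.add hB'
  refine tendsto_of_tendsto_of_tendsto_of_le_of_le hlower hupper (fun i => ?_) (fun i => ?_)
  · exact tsub_le_iff_right.2 <| (lintegral_mono_set hBA).trans (lintegral_union_le _ _ _)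
  · exact (lintegral_mono_set hAB).trans (lintegral_union_le _ _ _)

section NormedGroup

variable {E : Type*} [NormedAddCommGroup E] [MeasurableSpace E]

theorem tendsto_setLIntegral_dist_le_of_tendsto {μ : Measure E} {X : Set E}
    {F : ι → E → ℝ≥0∞} {l : Filter ι} {c : ℝ≥0∞} {x : E} {R r : ℝ} (hR : ‖x‖ + 1 < R)
    (hball : Tendsto (fun i => ∫⁻ y in closedBall 0 R ∩ X, F i y ∂μ) l (𝓝 c))
    (hfar : ∀ r > 0, Tendsto (fun i => ∫⁻ y in {y ∈ X | r < dist x y}, F i y ∂μ) l (𝓝 0))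
    (hr : 0 < r) :
    Tendsto (fun i => ∫⁻ y in {y ∈ X | dist x y ≤ r}, F i y ∂μ) l (𝓝 c) := by
  refine tendsto_setLIntegral_of_subset_union ?_ ?_ hball (hfar r hr) (hfar 1 one_pos)
  · rintro y ⟨-, hy⟩
    exact (le_or_gt (dist x y) r).imp (⟨hy, ·⟩) (⟨hy, ·⟩)
  · rintro y ⟨hy, -⟩
    by_cases hyR : ‖y‖ ≤ R
    · exact Or.inl ⟨by simpa using hyR, hy⟩
    · refine Or.inr ⟨hy, ?_⟩
      have := norm_sub_norm_le y x
      rw [dist_comm, dist_eq_norm]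
      linarith

variable [BorelSpace E]

theorem setLIntegral_dist_gt_le {μ : Measure E} [μ.IsAddRightInvariant] {X : Set E}
    (hX : MeasurableSet X) {T : E → ℝ} {x : E} {c t r s : ℝ} (hc : 0 ≤ c) (ht : 0 ≤ t)
    (hr : 0 < r) (hs : 0 ≤ s) (hT : ∀ y ∈ X, T y ≤ c * (t + dist x y ^ 2) ^ (-s / 2)) :
    ∫⁻ y in {y ∈ X | r < dist x y}, ENNReal.ofReal (T y) ∂μ ≤
      ENNReal.ofReal (c * (r / (r + 1)) ^ (-s)) * ∫⁻ z, ENNReal.ofReal ((1 + ‖z‖) ^ (-s)) ∂μ := by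
  have hfar : MeasurableSet {y ∈ X | r < dist x y} :=
    hX.inter (isOpen_lt continuous_const (continuous_const.dist continuous_id)).measurableSet
  have hpt : ∀ y ∈ {y ∈ X | r < dist x y},
      ENNReal.ofReal (T y) ≤ ENNReal.ofReal (c * (r / (r + 1)) ^ (-s)) *
        ENNReal.ofReal ((1 + ‖y - x‖) ^ (-s)) := by
    rintro y ⟨hyX, hry⟩
    rw [← ENNReal.ofReal_mul (by positivity), ← dist_eq_norm, dist_comm, mul_assoc]
    exact ENNReal.ofReal_le_ofReal <| (hT y hyX).trans <|
      mul_le_mul_of_nonneg_left (rpow_add_sq_le_mul_one_add_rpow ht hr hry hs) hc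
  calc ∫⁻ y in {y ∈ X | r < dist x y}, ENNReal.ofReal (T y) ∂μ
      ≤ ∫⁻ y in {y ∈ X | r < dist x y}, ENNReal.ofReal (c * (r / (r + 1)) ^ (-s)) *
          ENNReal.ofReal ((1 + ‖y - x‖) ^ (-s)) ∂μ := setLIntegral_mono' hfar hpt
    _ ≤ ∫⁻ y, ENNReal.ofReal (c * (r / (r + 1)) ^ (-s)) *
          ENNReal.ofReal ((1 + ‖y - x‖) ^ (-s)) ∂μ := setLIntegral_le_lintegral _ _
    _ = ENNReal.ofReal (c * (r / (r + 1)) ^ (-s)) *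
          ∫⁻ z, ENNReal.ofReal ((1 + ‖z‖) ^ (-s)) ∂μ := by
        rw [lintegral_const_mul' _ _ ENNReal.ofReal_ne_top,
          lintegral_sub_right_eq_self (fun z => ENNReal.ofReal ((1 + ‖z‖) ^ (-s)))]

theorem exists_seq_ae_tendsto_setIntegral_mul_indicator_closedBall [ProperSpace E]
    {μ : Measure E} [IsFiniteMeasureOnCompacts μ] {X : Set E} {T : ℝ → E → E → ℝ}
    (hTmeas : Measurable fun p : ℝ × E × E => T p.1 p.2.1 p.2.2)
    (hcont : ∀ g : E → ℝ, MemLp g 2 (μ.restrict X) →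
      Tendsto (fun t => eLpNorm (fun x => (∫ y in X, T t x y * g y ∂μ) - g x) 2 (μ.restrict X))
        (𝓝[>] 0) (𝓝 0)) :
    ∃ tseq : ℕ → ℝ, (∀ n, tseq n ∈ Ioi 0) ∧ Tendsto tseq atTop (𝓝[>] 0) ∧
      ∀ᵐ x ∂μ.restrict X, ∀ m : ℕ, Tendsto
        (fun n => ∫ y in X, T (tseq n) x y * (closedBall 0 m).indicator 1 y ∂μ) atTop
        (𝓝 ((closedBall (0 : E) m).indicator 1 x)) := by
  have hgmeas : ∀ m : ℕ, Measurable ((closedBall (0 : E) m).indicator (1 : E → ℝ)) := fun m =>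
    measurable_one.indicator measurableSet_closedBall
  have hconv : ∀ m : ℕ, TendstoInMeasure (μ.restrict X)
      (fun t x => ∫ y in X, T t x y * (closedBall 0 m).indicator 1 y ∂μ) (𝓝[>] 0)
      ((closedBall (0 : E) m).indicator 1) := fun m =>
    tendstoInMeasure_of_tendsto_eLpNorm two_ne_zero
      (fun t => (stronglyMeasurable_setIntegral_mul
        (hTmeas.comp (measurable_const.prodMk measurable_id)) (hgmeas m) X).aestronglyMeasurable)
      (hgmeas m).aestronglyMeasurable
      (hcont _ (memLp_indicator_const 2 measurableSet_closedBall 1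
        (Or.inr ((Measure.restrict_apply_le _ _).trans_lt measure_closedBall_lt_top).ne)))
  exact exists_seq_forall_tendsto_ae_of_tendstoInMeasure hconv self_mem_nhdsWithin

end NormedGroup

theorem tendsto_setLIntegral_dist_gt_nhdsGT_zero {d : ℕ} {X : Set (Rd d)}
    (hX : MeasurableSet X) {T : ℝ → Rd d → ℝ} {x : Rd d} {C ν r : ℝ} (hC : 0 ≤ C) (hν : 0 < ν)
    (hr : 0 < r) (hT : ∀ t > 0, ∀ y ∈ X,
      T t y ≤ C * t ^ ν * (t + dist x y ^ 2) ^ (-(d : ℝ) / 2 - ν)) :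
    Tendsto (fun t => ∫⁻ y in {y ∈ X | r < dist x y}, ENNReal.ofReal (T t y))
      (𝓝[>] 0) (𝓝 0) := by
  set s : ℝ := d + 2 * ν
  have hK : ∫⁻ z : Rd d, ENNReal.ofReal ((1 + ‖z‖) ^ (-s)) ≠ ∞ :=
    (finite_integral_one_add_norm (by rw [finrank_euclideanSpace_fin]; linarith)).ne
  have hpow : Tendsto (fun t : ℝ => C * t ^ ν * (r / (r + 1)) ^ (-s)) (𝓝[>] 0) (𝓝 0) := by
    have := ((Real.continuousAt_rpow_const 0 ν (Or.inr hν.le)).tendsto.const_mul C).mul_const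
      ((r / (r + 1)) ^ (-s))
    simpa [Real.zero_rpow hν.ne'] using this.mono_left nhdsWithin_le_nhds
  have hbound := ENNReal.Tendsto.mul_const (ENNReal.tendsto_ofReal hpow) (Or.inr hK)
  rw [ENNReal.ofReal_zero, zero_mul] at hbound
  refine tendsto_of_tendsto_of_tendsto_of_le_of_le' tendsto_const_nhds hbound
    (.of_forall fun _ => zero_le) ?_
  filter_upwards [self_mem_nhdsWithin] with t (ht : 0 < t)
  refine setLIntegral_dist_gt_le (μ := volume) (c := C * t ^ ν) (s := s) hX (by positivity)
    ht.le hr (by positivity) fun y hy => ?_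
  convert hT t ht y hy using 3
  ring

end MeasureTheory

/-- If a kernel `T` on a measurable `X ⊆ ℝ^d` satisfies the (A₀′) upper
bound and is strongly continuous on `L²(X)` at `t = 0⁺`, then there is a sequence `t_n → 0⁺`
such that for a.e. `x ∈ X` and every `r > 0`:
`∫_{{|x−y|>r}} T_{t_n}(x,y) dy → 0` and `∫_{{|x−y|≤r}} T_{t_n}(x,y) dy → 1`. -/
theorem stmt16
    {d : ℕ} {X : Set (Rd d)} (hXmeas : MeasurableSet X)
    (T : ℝ → Rd d → Rd d → ℝ)
    (hTmeas : Measurable fun p : ℝ × Rd d × Rd d => T p.1 p.2.1 p.2.2)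
    (C₀ ν : ℝ) (hC₀ : 0 < C₀) (hν : ν ∈ Set.Ioo (0 : ℝ) 1)
    -- (i)
    (hA0 : ∀ t > 0, ∀ x ∈ X, ∀ y ∈ X,
      0 ≤ T t x y ∧ T t x y ≤ C₀ * t ^ ν * (t + dist x y ^ 2) ^ (-(d : ℝ) / 2 - ν))
    -- (ii) strong continuity on L²(X) as t → 0⁺
    (hcont : ∀ g : Rd d → ℝ, MemLp g 2 (volume.restrict X) →
      Tendsto (fun t => eLpNorm (fun x => (∫ y in X, T t x y * g y) - g x) 2
          (volume.restrict X))
        (nhdsWithin 0 (Set.Ioi 0)) (nhds 0)) :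
    ∃ tseq : ℕ → ℝ, (∀ n, 0 < tseq n) ∧ Tendsto tseq atTop (nhds 0) ∧
      ∀ᵐ x ∂volume.restrict X, ∀ r > (0 : ℝ),
        Tendsto (fun n => ∫⁻ y in {y ∈ X | r < dist x y},
            ENNReal.ofReal (T (tseq n) x y)) atTop (nhds 0) ∧
        Tendsto (fun n => ∫⁻ y in {y ∈ X | dist x y ≤ r},
            ENNReal.ofReal (T (tseq n) x y)) atTop (nhds 1) := by
  obtain ⟨hν0, -⟩ := hν
  obtain ⟨tseq, htpos, htend, hae⟩ :=
    exists_seq_ae_tendsto_setIntegral_mul_indicator_closedBall hTmeas hcont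
  have hfar : ∀ x ∈ X, ∀ r > 0, Tendsto (fun n => ∫⁻ y in {y ∈ X | r < dist x y},
      ENNReal.ofReal (T (tseq n) x y)) atTop (𝓝 0) := fun x hx r hr =>
    (tendsto_setLIntegral_dist_gt_nhdsGT_zero hXmeas hC₀.le hν0 hr
      fun t ht y hy => (hA0 t ht x hx y hy).2).comp htend
  refine ⟨tseq, htpos, tendsto_nhds_of_tendsto_nhdsWithin htend, ?_⟩
  filter_upwards [hae, ae_restrict_mem hXmeas] with x hx hxX r hr
  obtain ⟨m, hm⟩ := exists_nat_gt (‖x‖ + 1)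
  have hball : Tendsto (fun n => ∫⁻ y in closedBall 0 m ∩ X, ENNReal.ofReal (T (tseq n) x y))
      atTop (𝓝 1) := by
    have hlim := ENNReal.tendsto_ofReal (hx m)
    rw [indicator_of_mem (mem_closedBall_zero_iff.2 (by linarith)), Pi.one_apply, ENNReal.ofReal_one] at hlim
    refine hlim.congr fun n => ofReal_setIntegral_mul_indicator_one hXmeas
      measurableSet_closedBall measure_closedBall_lt_top.ne
      (hTmeas.comp (measurable_const.prodMk (measurable_const.prodMk measurable_id)))
      fun y hy => ⟨(hA0 _ (htpos n) x hxX y hy).1, (hA0 _ (htpos n) x hxX y hy).2.trans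
        (mul_rpow_add_sq_le hC₀.le (htpos n) (by linarith [d.cast_nonneg (α := ℝ)]))⟩
  exact ⟨hfar x hxX r hr, tendsto_setLIntegral_dist_le_of_tendsto hm hball (hfar x hxX) hr⟩
end
end

section
/- Let X ⊆ ℝ^d be a measurable set and let T be a measurable kernel on (0,∞) × X × X satisfying: (i) 0 ≤ T_t(x,y) ≤ C₀ t^ν (t + |x−y|²)^{−d/2−ν} for some C₀ > 0, ν ∈ (0,1); (ii) for every g ∈ L²(X), T_t g → g in L²(X) as t → 0⁺. Then for every f ∈ L¹(X) + L^∞(X) there exists a sequence t_n → 0⁺ such that T_{t_n} f(x) → f(x) for almost every x ∈ X. -/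
open MeasureTheory Set Metric Filter
open scoped ENNReal NNReal

noncomputable section

/-!
Write `f₁ + f₂ = (b + h) + (f₁ - b) + (f₂ - h)`, where `b ∈ L¹ ∩ L²` is close to `f₁` in `L¹`
and `h` is `f₂` cut off outside a large ball. Strong continuity makes `T_t (b + h) - (b + h)`
small in `L²`. The bound (i) is symmetric in `x, y` and `∫ t^ν (t + |u|²)^(-d/2-ν) du` does not
depend on `t`, so by Schur's test the `T_t` are uniformly bounded on `L¹` and
`T_t (f₁ - b) - (f₁ - b)` is small in `L¹`. Choosing `b`, `h` and `t_n` diagonally, both errors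
tend to `0` in measure, hence a.e. along a subsequence. Near a fixed `x`, the remaining part
`f₂ - h` vanishes on the unit ball around `x`, and the tail of the kernel bounds
`|T_t (f₂ - h)(x)|` by a multiple of `t^ν`.
-/

open scoped Topology

namespace MeasureTheory

variable {α β ι E : Type*} [MeasurableSpace α] [MeasurableSpace β] {μ : Measure α}
  {ν : Measure β}

theorem TendstoInMeasure.add [SeminormedAddCommGroup E] {l : Filter ι} {f g : ι → α → E}
    {f' g' : α → E} (hf : TendstoInMeasure μ f l f') (hg : TendstoInMeasure μ g l g') :
    TendstoInMeasure μ (f + g) l (f' + g') := by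
  intro ε hε
  have hε2 : 0 < ε / 2 := ENNReal.half_pos hε.ne'
  refine tendsto_of_tendsto_of_tendsto_of_le_of_le tendsto_const_nhds
    (by simpa using (hf _ hε2).add (hg _ hε2)) (fun _ => zero_le) fun i => ?_
  refine (measure_mono fun x hx => ?_).trans (measure_union_le _ _)
  by_contra! h
  simp only [mem_union, mem_ofPred_eq, not_or, not_le] at h
  have := (edist_add_add_le (f i x) (g i x) (f' x) (g' x)).trans_lt
    (ENNReal.add_lt_add h.1 h.2)
  rw [ENNReal.add_halves] at this
  exact (not_le.2 this) hx

theorem MemLp.ae_norm_le_toReal_eLpNorm_top [NormedAddCommGroup E] {f : α → E}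
    (hf : MemLp f ∞ μ) : ∀ᵐ x ∂μ, ‖f x‖ ≤ (eLpNorm f ∞ μ).toReal := by
  have hfin := hf.eLpNorm_ne_top
  rw [eLpNorm_exponent_top] at hfin ⊢
  filter_upwards [ae_le_eLpNormEssSup (f := f) (μ := μ)] with x hx
  rw [← toReal_enorm]
  exact ENNReal.toReal_mono hfin hx

theorem MemLp.memLp_indicator_of_top [NormedAddCommGroup E] {f : α → E} (hf : MemLp f ∞ μ)
    {s : Set α} (hs : MeasurableSet s) (hμs : μ s ≠ ∞) (p : ℝ≥0∞) : MemLp (s.indicator f) p μ :=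
  (hf.indicator hs).mono_exponent_of_measure_support_ne_top (fun _ hx => indicator_of_notMem hx _)
    hμs le_top

theorem Integrable.exists_seq_memLp_tendsto_eLpNorm_sub [NormedAddCommGroup E] {f : α → E}
    (hf : Integrable f μ) {p : ℝ≥0∞} (hp0 : p ≠ 0) (hp : p ≠ ∞) :
    ∃ b : ℕ → α → E, (∀ n, Integrable (b n) μ ∧ MemLp (b n) p μ) ∧
      Tendsto (fun n => eLpNorm (f - b n) 1 μ) atTop (𝓝 0) := by
  have h := fun n : ℕ => (memLp_one_iff_integrable.2 hf).exists_simpleFunc_eLpNorm_sub_lt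
    ENNReal.one_ne_top (ENNReal.inv_ne_zero.2 (ENNReal.natCast_ne_top n))
  choose b hb_lt hb using h
  refine ⟨fun n => b n, fun n => ⟨memLp_one_iff_integrable.1 (hb n),
    (SimpleFunc.memLp_iff_integrable hp0 hp).2 (memLp_one_iff_integrable.1 (hb n))⟩, ?_⟩
  exact tendsto_of_tendsto_of_tendsto_of_le_of_le tendsto_const_nhds
    ENNReal.tendsto_inv_nat_nhds_zero (fun _ => zero_le) fun n => (hb_lt n).le

theorem aestronglyMeasurable_integral_mul [SFinite ν] {k : α → β → ℝ} {g : β → ℝ}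
    (hk : AEStronglyMeasurable (Function.uncurry k) (μ.prod ν))
    (hg : AEStronglyMeasurable g ν) :
    AEStronglyMeasurable (fun x => ∫ y, k x y * g y ∂ν) μ :=
  (hk.mul (hg.comp_quasiMeasurePreserving Measure.quasiMeasurePreserving_snd)).integral_prod_right'

theorem eLpNorm_one_integral_mul_le [SFinite μ] [SFinite ν] {k : α → β → ℝ} {g : β → ℝ}
    (hk : AEStronglyMeasurable (Function.uncurry k) (μ.prod ν))
    (hg : AEStronglyMeasurable g ν) {A : ℝ≥0∞} (hA : ∀ᵐ y ∂ν, ∫⁻ x, ‖k x y‖ₑ ∂μ ≤ A) :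
    eLpNorm (fun x => ∫ y, k x y * g y ∂ν) 1 μ ≤ A * eLpNorm g 1 ν := by
  have hkg : AEMeasurable (Function.uncurry fun x y => ‖k x y‖ₑ * ‖g y‖ₑ) (μ.prod ν) :=
    hk.enorm.mul (hg.comp_quasiMeasurePreserving Measure.quasiMeasurePreserving_snd).enorm
  rw [eLpNorm_one_eq_lintegral_enorm, eLpNorm_one_eq_lintegral_enorm]
  calc ∫⁻ x, ‖∫ y, k x y * g y ∂ν‖ₑ ∂μ ≤ ∫⁻ x, ∫⁻ y, ‖k x y‖ₑ * ‖g y‖ₑ ∂ν ∂μ :=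
        lintegral_mono fun x => (enorm_integral_le_lintegral_enorm _).trans_eq
          (by simp only [enorm_mul])
    _ = ∫⁻ y, (∫⁻ x, ‖k x y‖ₑ ∂μ) * ‖g y‖ₑ ∂ν := by
        rw [lintegral_lintegral_swap hkg]
        exact lintegral_congr fun y => lintegral_mul_const' _ _ enorm_ne_top
    _ ≤ ∫⁻ y, A * ‖g y‖ₑ ∂ν := lintegral_mono_ae (hA.mono fun y hy => by gcongr)
    _ = A * ∫⁻ y, ‖g y‖ₑ ∂ν := lintegral_const_mul'' _ hg.enorm

end MeasureTheory

theorem exists_pos_seq_tendsto_zero_diagonal {F : ℕ → ℝ → ℝ≥0∞}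
    (hF : ∀ n, Tendsto (F n) (𝓝[>] 0) (𝓝 0)) :
    ∃ t : ℕ → ℝ, (∀ n, 0 < t n) ∧ Tendsto t atTop (𝓝 0) ∧
      Tendsto (fun n => F n (t n)) atTop (𝓝 0) := by
  have h : ∀ n : ℕ, ∃ t ∈ Ioo (0 : ℝ) (1 / (n + 1)), F n t < (n : ℝ≥0∞)⁻¹ := fun n =>
    (Filter.Eventually.and (Ioo_mem_nhdsGT (by positivity : (0 : ℝ) < 1 / (n + 1)))
      ((hF n).eventually (gt_mem_nhds (ENNReal.inv_pos.2 (ENNReal.natCast_ne_top n))))).exists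
  choose t ht hFt using h
  refine ⟨t, fun n => (ht n).1, ?_, ?_⟩
  · exact tendsto_of_tendsto_of_tendsto_of_le_of_le tendsto_const_nhds
      tendsto_one_div_add_atTop_nhds_zero_nat (fun n => (ht n).1.le) fun n => (ht n).2.le
  · exact tendsto_of_tendsto_of_tendsto_of_le_of_le tendsto_const_nhds
      ENNReal.tendsto_inv_nat_nhds_zero (fun _ => zero_le) fun n => (hFt n).le

section JapaneseBracket

variable {E : Type*} [NormedAddCommGroup E] {s t : ℝ}

theorem add_norm_sq_rpow_neg_le (ht : 0 < t) (hs : 0 ≤ s) (u : E) :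
    (t + ‖u‖ ^ 2) ^ (-s) ≤ t ^ (-s) :=
  Real.rpow_le_rpow_of_nonpos ht (le_add_of_nonneg_right (by positivity)) (neg_nonpos.2 hs)

theorem add_norm_sq_rpow_neg_le_of_one_le_norm (ht : 0 ≤ t) (hs : 0 ≤ s) {u : E}
    (hu : 1 ≤ ‖u‖) : (t + ‖u‖ ^ 2) ^ (-s) ≤ 2 ^ s * (1 + ‖u‖ ^ 2) ^ (-s) := by
  have hle : 1 + ‖u‖ ^ 2 ≤ 2 * (t + ‖u‖ ^ 2) := by nlinarith
  calc (t + ‖u‖ ^ 2) ^ (-s) = 2 ^ s * (2 * (t + ‖u‖ ^ 2)) ^ (-s) := by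
        rw [Real.mul_rpow zero_le_two (by positivity), ← mul_assoc, Real.rpow_neg zero_le_two,
          mul_inv_cancel₀ (by positivity), one_mul]
    _ ≤ 2 ^ s * (1 + ‖u‖ ^ 2) ^ (-s) := mul_le_mul_of_nonneg_left
        (Real.rpow_le_rpow_of_nonpos (by positivity) hle (neg_nonpos.2 hs)) (by positivity)

variable [NormedSpace ℝ E]

theorem add_norm_sq_rpow_neg_eq (ht : 0 < t) (u : E) :
    (t + ‖u‖ ^ 2) ^ (-s) = t ^ (-s) * (1 + ‖(√t)⁻¹ • u‖ ^ 2) ^ (-s) := by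
  rw [← Real.mul_rpow ht.le (by positivity), norm_smul, mul_pow, norm_inv, Real.norm_eq_abs,
    abs_of_nonneg (Real.sqrt_nonneg t), inv_pow, Real.sq_sqrt ht.le, mul_add, mul_one,
    mul_inv_cancel_left₀ ht.ne']

variable [FiniteDimensional ℝ E] [MeasurableSpace E] [BorelSpace E] {μ : Measure E}
  [μ.IsAddHaarMeasure]

theorem integrable_add_norm_sq_rpow_neg (ht : 0 < t) (hs : (Module.finrank ℝ E : ℝ) < 2 * s) :
    Integrable (fun u : E => (t + ‖u‖ ^ 2) ^ (-s)) μ := by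
  have h := (integrable_rpow_neg_one_add_norm_sq (μ := μ) hs).comp_smul
    (inv_ne_zero (Real.sqrt_pos.2 ht).ne')
  simp only [neg_div, mul_div_cancel_left₀ s two_ne_zero] at h
  simp_rw [add_norm_sq_rpow_neg_eq (s := s) ht]
  exact h.const_mul _

theorem integral_add_norm_sq_rpow_neg (ht : 0 < t) :
    ∫ u, (t + ‖u‖ ^ 2) ^ (-s) ∂μ =
      t ^ ((Module.finrank ℝ E : ℝ) / 2 - s) * ∫ u, (1 + ‖u‖ ^ 2) ^ (-s) ∂μ := by
  simp_rw [add_norm_sq_rpow_neg_eq (s := s) ht]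
  rw [integral_const_mul, Measure.integral_comp_inv_smul_of_nonneg μ
    (fun u : E => (1 + ‖u‖ ^ 2) ^ (-s)) (Real.sqrt_nonneg t), smul_eq_mul, ← mul_assoc,
    Real.sqrt_eq_rpow, ← Real.rpow_natCast, ← Real.rpow_mul ht.le, ← Real.rpow_add ht]
  ring_nf

end JapaneseBracket

section PoissonTypeKernel

variable {d : ℕ}

def poissonMajorant (d : ℕ) (ν t : ℝ) (u : Rd d) : ℝ :=
  t ^ ν * (t + ‖u‖ ^ 2) ^ (-((d : ℝ) / 2 + ν))

section PoissonMajorant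

variable {ν t : ℝ}

theorem poissonMajorant_nonneg (ht : 0 ≤ t) (u : Rd d) : 0 ≤ poissonMajorant d ν t u := by
  unfold poissonMajorant; positivity

theorem integrable_poissonMajorant (hν : 0 < ν) (ht : 0 < t) :
    Integrable (poissonMajorant d ν t) :=
  (integrable_add_norm_sq_rpow_neg ht (by rw [finrank_euclideanSpace_fin]; linarith)).const_mul _

theorem integral_poissonMajorant (ht : 0 < t) :
    ∫ u, poissonMajorant d ν t u = ∫ u, poissonMajorant d ν 1 u := by
  simp only [poissonMajorant, integral_const_mul, Real.one_rpow, one_mul]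
  rw [integral_add_norm_sq_rpow_neg ht, finrank_euclideanSpace_fin, ← mul_assoc,
    ← Real.rpow_add ht]
  ring_nf
  rw [Real.rpow_zero, one_mul]

theorem poissonMajorant_le (hν : 0 ≤ ν) (ht : 0 < t) (u : Rd d) :
    poissonMajorant d ν t u ≤ t ^ (-(d : ℝ) / 2) := by
  calc poissonMajorant d ν t u ≤ t ^ ν * t ^ (-((d : ℝ) / 2 + ν)) :=
        mul_le_mul_of_nonneg_left (add_norm_sq_rpow_neg_le ht (by positivity) u) (by positivity)
    _ = t ^ (-(d : ℝ) / 2) := by rw [← Real.rpow_add ht]; ring_nf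

theorem poissonMajorant_le_of_one_le_norm (hν : 0 ≤ ν) (ht : 0 ≤ t) {u : Rd d}
    (hu : 1 ≤ ‖u‖) :
    poissonMajorant d ν t u ≤ 2 ^ ((d : ℝ) / 2 + ν) * t ^ ν * poissonMajorant d ν 1 u := by
  simp only [poissonMajorant, Real.one_rpow, one_mul]
  rw [mul_comm (2 ^ _) (t ^ ν), mul_assoc]
  exact mul_le_mul_of_nonneg_left
    (add_norm_sq_rpow_neg_le_of_one_le_norm ht (by positivity) hu) (by positivity)

end PoissonMajorant

def kernelOp (X : Set (Rd d)) (T : ℝ → Rd d → Rd d → ℝ) (t : ℝ) (g : Rd d → ℝ) (x : Rd d) :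
    ℝ :=
  ∫ y in X, T t x y * g y

def PoissonTypeBound (X : Set (Rd d)) (T : ℝ → Rd d → Rd d → ℝ) (C₀ ν : ℝ) : Prop :=
  ∀ t > 0, ∀ x ∈ X, ∀ y ∈ X,
    0 ≤ T t x y ∧ T t x y ≤ C₀ * t ^ ν * (t + dist x y ^ 2) ^ (-(d : ℝ) / 2 - ν)

theorem aestronglyMeasurable_kernelOp {X : Set (Rd d)} {T : ℝ → Rd d → Rd d → ℝ} {t : ℝ}
    (hTm : Measurable (Function.uncurry (T t))) {μ : Measure (Rd d)} [SFinite μ]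
    {g : Rd d → ℝ} (hg : AEStronglyMeasurable g (volume.restrict X)) :
    AEStronglyMeasurable (kernelOp X T t g) μ :=
  aestronglyMeasurable_integral_mul hTm.aestronglyMeasurable hg

theorem kernelOp_add {X : Set (Rd d)} {T : ℝ → Rd d → Rd d → ℝ} {t : ℝ} {x : Rd d}
    {g₁ g₂ : Rd d → ℝ} (h₁ : IntegrableOn (fun y => T t x y * g₁ y) X)
    (h₂ : IntegrableOn (fun y => T t x y * g₂ y) X) :
    kernelOp X T t (g₁ + g₂) x = kernelOp X T t g₁ x + kernelOp X T t g₂ x := by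
  simp only [kernelOp, Pi.add_apply, mul_add]
  exact integral_add h₁ h₂

theorem tendstoInMeasure_kernelOp_sub_self {X : Set (Rd d)} {T : ℝ → Rd d → Rd d → ℝ}
    (hTm : ∀ t, Measurable (Function.uncurry (T t))) {p : ℝ≥0∞} (hp : p ≠ 0) {t : ℕ → ℝ}
    {g : ℕ → Rd d → ℝ} (hg : ∀ n, AEStronglyMeasurable (g n) (volume.restrict X))
    (h : Tendsto (fun n => eLpNorm (kernelOp X T (t n) (g n) - g n) p (volume.restrict X))
      atTop (𝓝 0)) :
    TendstoInMeasure (volume.restrict X) (fun n => kernelOp X T (t n) (g n) - g n) atTop 0 :=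
  tendstoInMeasure_of_tendsto_eLpNorm hp
    (fun n => (aestronglyMeasurable_kernelOp (hTm _) (hg n)).sub (hg n)) aestronglyMeasurable_zero
    (by simpa only [sub_zero] using h)

namespace PoissonTypeBound

variable {X : Set (Rd d)} {T : ℝ → Rd d → Rd d → ℝ} {C₀ ν t : ℝ} {x : Rd d}

theorem swap (hT : PoissonTypeBound X T C₀ ν) :
    PoissonTypeBound X (fun t x y => T t y x) C₀ ν := fun t ht x hx y hy => by
  simpa only [dist_comm] using hT t ht y hy x hx

theorem le_poissonMajorant (hT : PoissonTypeBound X T C₀ ν) (ht : 0 < t) (hx : x ∈ X) {y : Rd d}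
    (hy : y ∈ X) : T t x y ≤ C₀ * poissonMajorant d ν t (x - y) := by
  rw [poissonMajorant, ← mul_assoc, ← dist_eq_norm, neg_add', ← neg_div]
  exact (hT t ht x hx y hy).2

theorem lintegral_enorm_le (hT : PoissonTypeBound X T C₀ ν) (hX : MeasurableSet X)
    (hC₀ : 0 ≤ C₀) (hν : 0 < ν) (ht : 0 < t) (hx : x ∈ X) :
    ∫⁻ y in X, ‖T t x y‖ₑ ≤ ENNReal.ofReal (C₀ * ∫ u, poissonMajorant d ν 1 u) := by
  have hP := ((integrable_poissonMajorant hν ht).comp_sub_left x).const_mul C₀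
  calc ∫⁻ y in X, ‖T t x y‖ₑ ≤ ∫⁻ y in X, ENNReal.ofReal (C₀ * poissonMajorant d ν t (x - y)) :=
        setLIntegral_mono' hX fun y hy => by
          rw [Real.enorm_eq_ofReal (hT t ht x hx y hy).1]
          exact ENNReal.ofReal_le_ofReal (hT.le_poissonMajorant ht hx hy)
    _ ≤ ∫⁻ y, ENNReal.ofReal (C₀ * poissonMajorant d ν t (x - y)) :=
        setLIntegral_le_lintegral _ _
    _ = ENNReal.ofReal (C₀ * ∫ u, poissonMajorant d ν 1 u) := by
        rw [← ofReal_integral_eq_lintegral_ofReal hP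
          (ae_of_all _ fun y => mul_nonneg hC₀ (poissonMajorant_nonneg ht.le _)),
          integral_const_mul, integral_sub_left_eq_self (poissonMajorant d ν t),
          integral_poissonMajorant ht]

theorem integrableOn (hT : PoissonTypeBound X T C₀ ν) (hTm : Measurable (Function.uncurry (T t)))
    (hX : MeasurableSet X) (hC₀ : 0 ≤ C₀) (hν : 0 < ν) (ht : 0 < t) (hx : x ∈ X) :
    IntegrableOn (T t x) X :=
  ⟨(hTm.comp measurable_prodMk_left).aestronglyMeasurable,
    (hT.lintegral_enorm_le hX hC₀ hν ht hx).trans_lt ENNReal.ofReal_lt_top⟩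

theorem memLp_top (hT : PoissonTypeBound X T C₀ ν) (hTm : Measurable (Function.uncurry (T t)))
    (hX : MeasurableSet X) (hC₀ : 0 ≤ C₀) (hν : 0 ≤ ν) (ht : 0 < t) (hx : x ∈ X) :
    MemLp (T t x) ∞ (volume.restrict X) :=
  memLp_top_of_bound (hTm.comp measurable_prodMk_left).aestronglyMeasurable
    (C₀ * t ^ (-(d : ℝ) / 2)) <| ae_restrict_of_forall_mem hX fun y hy => by
      rw [Real.norm_eq_abs, abs_of_nonneg (hT t ht x hx y hy).1]
      exact (hT.le_poissonMajorant ht hx hy).trans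
        (mul_le_mul_of_nonneg_left (poissonMajorant_le hν ht _) hC₀)

theorem integrableOn_mul_of_integrableOn (hT : PoissonTypeBound X T C₀ ν)
    (hTm : Measurable (Function.uncurry (T t))) (hX : MeasurableSet X) (hC₀ : 0 ≤ C₀)
    (hν : 0 ≤ ν) (ht : 0 < t) (hx : x ∈ X) {g : Rd d → ℝ} (hg : IntegrableOn g X) :
    IntegrableOn (fun y => T t x y * g y) X :=
  hg.mul_of_top_right (hT.memLp_top hTm hX hC₀ hν ht hx)

theorem integrableOn_mul_of_memLp_top (hT : PoissonTypeBound X T C₀ ν)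
    (hTm : Measurable (Function.uncurry (T t))) (hX : MeasurableSet X) (hC₀ : 0 ≤ C₀)
    (hν : 0 < ν) (ht : 0 < t) (hx : x ∈ X) {g : Rd d → ℝ}
    (hg : MemLp g ∞ (volume.restrict X)) : IntegrableOn (fun y => T t x y * g y) X :=
  (hT.integrableOn hTm hX hC₀ hν ht hx).mul_of_top_left hg

theorem eLpNorm_one_kernelOp_le (hT : PoissonTypeBound X T C₀ ν)
    (hTm : Measurable (Function.uncurry (T t))) (hX : MeasurableSet X) (hC₀ : 0 ≤ C₀)
    (hν : 0 < ν) (ht : 0 < t) {g : Rd d → ℝ} (hg : AEStronglyMeasurable g (volume.restrict X)) :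
    eLpNorm (kernelOp X T t g) 1 (volume.restrict X) ≤
      ENNReal.ofReal (C₀ * ∫ u, poissonMajorant d ν 1 u) * eLpNorm g 1 (volume.restrict X) :=
  eLpNorm_one_integral_mul_le hTm.aestronglyMeasurable hg
    (ae_restrict_of_forall_mem hX fun _ hy => hT.swap.lintegral_enorm_le hX hC₀ hν ht hy)

theorem norm_kernelOp_le_of_eq_zero_near (hT : PoissonTypeBound X T C₀ ν)
    (hX : MeasurableSet X) (hC₀ : 0 ≤ C₀) (hν : 0 < ν) (ht : 0 < t) (hx : x ∈ X)
    {g : Rd d → ℝ} {M : ℝ} (hM : 0 ≤ M) (hg : ∀ᵐ y ∂volume.restrict X, ‖g y‖ ≤ M)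
    (hg0 : ∀ y, dist x y < 1 → g y = 0) :
    ‖kernelOp X T t g x‖ ≤
      M * C₀ * 2 ^ ((d : ℝ) / 2 + ν) * (∫ u, poissonMajorant d ν 1 u) * t ^ ν := by
  set c := M * C₀ * 2 ^ ((d : ℝ) / 2 + ν) * t ^ ν
  have hc : 0 ≤ c := by positivity
  have hG := ((integrable_poissonMajorant hν one_pos).comp_sub_left x).const_mul c
  have hfar : ∀ y ∈ X, ‖g y‖ ≤ M → ‖T t x y * g y‖ ≤ c * poissonMajorant d ν 1 (x - y) := by
    intro y hy hgy
    by_cases hxy : dist x y < 1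
    · rw [hg0 y hxy, mul_zero, norm_zero]
      exact mul_nonneg hc (poissonMajorant_nonneg zero_le_one _)
    rw [not_lt, dist_eq_norm] at hxy
    rw [norm_mul, Real.norm_eq_abs, abs_of_nonneg (hT t ht x hx y hy).1]
    calc T t x y * ‖g y‖ ≤ C₀ * poissonMajorant d ν t (x - y) * M :=
          mul_le_mul (hT.le_poissonMajorant ht hx hy) hgy (norm_nonneg _)
            (mul_nonneg hC₀ (poissonMajorant_nonneg ht.le _))
      _ ≤ C₀ * (2 ^ ((d : ℝ) / 2 + ν) * t ^ ν * poissonMajorant d ν 1 (x - y)) * M := by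
          gcongr
          exact poissonMajorant_le_of_one_le_norm hν.le ht.le hxy
      _ = c * poissonMajorant d ν 1 (x - y) := by ring
  calc ‖kernelOp X T t g x‖ ≤ ∫ y in X, c * poissonMajorant d ν 1 (x - y) :=
        norm_integral_le_of_norm_le hG.integrableOn <| by
          filter_upwards [hg, ae_restrict_mem hX] with y hgy hy using hfar y hy hgy
    _ ≤ ∫ y, c * poissonMajorant d ν 1 (x - y) :=
        setIntegral_le_integral hG
          (ae_of_all _ fun y => mul_nonneg hc (poissonMajorant_nonneg zero_le_one _))
    _ = M * C₀ * 2 ^ ((d : ℝ) / 2 + ν) * (∫ u, poissonMajorant d ν 1 u) * t ^ ν := by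
        rw [integral_const_mul, integral_sub_left_eq_self (poissonMajorant d ν 1)]
        ring

theorem tendsto_eLpNorm_one_kernelOp_sub_self (hT : PoissonTypeBound X T C₀ ν)
    (hTm : ∀ t, Measurable (Function.uncurry (T t))) (hX : MeasurableSet X) (hC₀ : 0 ≤ C₀)
    (hν : 0 < ν) {t : ℕ → ℝ} (ht0 : ∀ n, 0 < t n) {g : ℕ → Rd d → ℝ}
    (hg : ∀ n, AEStronglyMeasurable (g n) (volume.restrict X))
    (hlim : Tendsto (fun n => eLpNorm (g n) 1 (volume.restrict X)) atTop (𝓝 0)) :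
    Tendsto (fun n => eLpNorm (kernelOp X T (t n) (g n) - g n) 1 (volume.restrict X))
      atTop (𝓝 0) := by
  set A := ENNReal.ofReal (C₀ * ∫ u, poissonMajorant d ν 1 u)
  have hA : A + 1 ≠ ∞ := by finiteness
  have hbound := ENNReal.Tendsto.const_mul hlim (Or.inr hA)
  rw [mul_zero] at hbound
  refine tendsto_of_tendsto_of_tendsto_of_le_of_le tendsto_const_nhds hbound (fun _ => zero_le)
    fun n => ?_
  calc eLpNorm (kernelOp X T (t n) (g n) - g n) 1 (volume.restrict X)
      ≤ eLpNorm (kernelOp X T (t n) (g n)) 1 (volume.restrict X) +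
          eLpNorm (g n) 1 (volume.restrict X) :=
        eLpNorm_sub_le (aestronglyMeasurable_kernelOp (hTm _) (hg n)) (hg n) le_rfl
    _ ≤ (A + 1) * eLpNorm (g n) 1 (volume.restrict X) := by
        rw [add_mul, one_mul]
        gcongr
        exact hT.eLpNorm_one_kernelOp_le (hTm _) hX hC₀ hν (ht0 n) (hg n)

theorem kernelOp_sub_self_add_eq (hT : PoissonTypeBound X T C₀ ν)
    (hTm : Measurable (Function.uncurry (T t))) (hX : MeasurableSet X) (hC₀ : 0 ≤ C₀)
    (hν : 0 < ν) (ht : 0 < t) (hx : x ∈ X) {f₁ f₂ b h : Rd d → ℝ} (hf₁ : IntegrableOn f₁ X)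
    (hf₂ : MemLp f₂ ∞ (volume.restrict X)) (hb : IntegrableOn b X)
    (hh : MemLp h ∞ (volume.restrict X)) :
    kernelOp X T t (f₁ + f₂) x - (f₁ + f₂) x =
      (kernelOp X T t (b + h) x - (b + h) x) + (kernelOp X T t (f₁ - b) x - (f₁ - b) x) +
        (kernelOp X T t (f₂ - h) x - (f₂ - h) x) := by
  have L1 : ∀ {g : Rd d → ℝ}, IntegrableOn g X → IntegrableOn (fun y => T t x y * g y) X :=
    hT.integrableOn_mul_of_integrableOn hTm hX hC₀ hν.le ht hx
  have Linf : ∀ {g : Rd d → ℝ}, MemLp g ∞ (volume.restrict X) →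
      IntegrableOn (fun y => T t x y * g y) X :=
    hT.integrableOn_mul_of_memLp_top hTm hX hC₀ hν ht hx
  have e₁ : kernelOp X T t f₁ x = kernelOp X T t (f₁ - b) x + kernelOp X T t b x := by
    rw [← kernelOp_add (L1 (hf₁.sub hb)) (L1 hb), sub_add_cancel]
  have e₂ : kernelOp X T t f₂ x = kernelOp X T t (f₂ - h) x + kernelOp X T t h x := by
    rw [← kernelOp_add (Linf (hf₂.sub hh)) (Linf hh), sub_add_cancel]
  rw [kernelOp_add (L1 hf₁) (Linf hf₂), kernelOp_add (L1 hb) (Linf hh), e₁, e₂]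
  simp only [Pi.add_apply, Pi.sub_apply]
  ring

theorem tendsto_kernelOp_sub_self_of_far (hT : PoissonTypeBound X T C₀ ν)
    (hX : MeasurableSet X) (hC₀ : 0 ≤ C₀) (hν : 0 < ν) (hx : x ∈ X) {t : ℕ → ℝ}
    (ht0 : ∀ k, 0 < t k) (ht : Tendsto t atTop (𝓝 0)) {r : ℕ → ℝ} (hr : Tendsto r atTop atTop)
    {g : Rd d → ℝ} {M : ℝ} (hM : 0 ≤ M) (hg : ∀ᵐ y ∂volume.restrict X, ‖g y‖ ≤ M) :
    Tendsto (fun k => kernelOp X T (t k) (g - (closedBall 0 (r k)).indicator g) x -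
      (g - (closedBall 0 (r k)).indicator g) x) atTop (𝓝 0) := by
  simp_rw [← indicator_compl]
  have hfar : ∀ᶠ k in atTop, ∀ y, dist x y < 1 → (closedBall 0 (r k))ᶜ.indicator g y = 0 :=
    (hr.eventually_ge_atTop (‖x‖ + 1)).mono fun k hk y hy => by
      refine indicator_of_notMem (not_not.2 (mem_closedBall_zero_iff.2 ?_)) _
      linarith [norm_sub_norm_le y x, dist_eq_norm y x, dist_comm x y]
  have hgM : ∀ k, ∀ᵐ y ∂volume.restrict X, ‖(closedBall 0 (r k))ᶜ.indicator g y‖ ≤ M :=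
    fun k => hg.mono fun y hy => (norm_indicator_le_norm_self _ _).trans hy
  have hbound := (ht.rpow_const_nhds_zero hν).const_mul
    (M * C₀ * 2 ^ ((d : ℝ) / 2 + ν) * ∫ u, poissonMajorant d ν 1 u)
  rw [mul_zero] at hbound
  refine squeeze_zero_norm' ?_ hbound
  filter_upwards [hfar] with k hk
  rw [hk x (by rw [dist_self]; exact one_pos), sub_zero]
  exact hT.norm_kernelOp_le_of_eq_zero_near hX hC₀ hν (ht0 k) hx hM (hgM k) hk

end PoissonTypeBound

end PoissonTypeKernel

/-- If a kernel `T` on a measurable `X ⊆ ℝ^d` satisfies the (A₀′) upper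
bound and is strongly continuous on `L²(X)` at `t = 0⁺`, then for every
`f ∈ L¹(X) + L^∞(X)` there is a sequence `t_n → 0⁺` with `T_{t_n} f(x) → f(x)` for a.e.
`x ∈ X`. -/
theorem stmt17
    {d : ℕ} {X : Set (Rd d)} (hXmeas : MeasurableSet X)
    (T : ℝ → Rd d → Rd d → ℝ)
    (hTmeas : Measurable fun p : ℝ × Rd d × Rd d => T p.1 p.2.1 p.2.2)
    (C₀ ν : ℝ) (hC₀ : 0 < C₀) (hν : ν ∈ Set.Ioo (0 : ℝ) 1)
    -- (i)
    (hA0 : ∀ t > 0, ∀ x ∈ X, ∀ y ∈ X,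
      0 ≤ T t x y ∧ T t x y ≤ C₀ * t ^ ν * (t + dist x y ^ 2) ^ (-(d : ℝ) / 2 - ν))
    -- (ii) strong continuity on L²(X) as t → 0⁺
    (hcont : ∀ g : Rd d → ℝ, MemLp g 2 (volume.restrict X) →
      Tendsto (fun t => eLpNorm (fun x => (∫ y in X, T t x y * g y) - g x) 2
          (volume.restrict X))
        (nhdsWithin 0 (Set.Ioi 0)) (nhds 0))
    -- f ∈ L¹(X) + L^∞(X)
    (f f₁ f₂ : Rd d → ℝ) (hf₁ : IntegrableOn f₁ X volume)
    (hf₂ : MemLp f₂ ⊤ (volume.restrict X)) (hf : f = f₁ + f₂) :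
    ∃ tseq : ℕ → ℝ, (∀ n, 0 < tseq n) ∧ Tendsto tseq atTop (nhds 0) ∧
      ∀ᵐ x ∂volume.restrict X,
        Tendsto (fun n => ∫ y in X, T (tseq n) x y * f y) atTop (nhds (f x)) := by
  subst hf
  have hT : PoissonTypeBound X T C₀ ν := hA0
  have hTm : ∀ t, Measurable (Function.uncurry (T t)) := fun t =>
    hTmeas.comp (measurable_const.prodMk measurable_id)
  obtain ⟨b, hb, hb_lim⟩ :=
    hf₁.exists_seq_memLp_tendsto_eLpNorm_sub two_ne_zero ENNReal.ofNat_ne_top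
  set near : ℕ → Rd d → ℝ := fun n => (closedBall 0 n).indicator f₂
  have hg : ∀ n, MemLp (b n + near n) 2 (volume.restrict X) := fun n =>
    (hb n).2.add (hf₂.memLp_indicator_of_top measurableSet_closedBall
      ((Measure.restrict_apply_le X _).trans_lt measure_closedBall_lt_top).ne 2)
  obtain ⟨t, ht0, ht, hA⟩ := exists_pos_seq_tendsto_zero_diagonal fun n => hcont _ (hg n)
  have hr : ∀ n, AEStronglyMeasurable (f₁ - b n) (volume.restrict X) := fun n =>
    (hf₁.sub (hb n).1).aestronglyMeasurable
  have hB := hT.tendsto_eLpNorm_one_kernelOp_sub_self hTm hXmeas hC₀.le hν.1 ht0 hr hb_lim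
  obtain ⟨ns, hns, hae⟩ := ((tendstoInMeasure_kernelOp_sub_self hTm two_ne_zero
    (fun n => (hg n).1) hA).add
      (tendstoInMeasure_kernelOp_sub_self hTm one_ne_zero hr hB)).exists_seq_tendsto_ae
  refine ⟨t ∘ ns, fun k => ht0 _, ht.comp hns.tendsto_atTop, ?_⟩
  filter_upwards [hae, ae_restrict_mem hXmeas] with x hnear hx
  have hfar := hT.tendsto_kernelOp_sub_self_of_far hXmeas hC₀.le hν.1 hx (fun k => ht0 (ns k))
    (ht.comp hns.tendsto_atTop) (tendsto_natCast_atTop_atTop.comp hns.tendsto_atTop)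
    ENNReal.toReal_nonneg hf₂.ae_norm_le_toReal_eLpNorm_top
  show Tendsto (fun k => kernelOp X T (t (ns k)) (f₁ + f₂) x) atTop (𝓝 ((f₁ + f₂) x))
  have hlim := hnear.add hfar
  simp only [Pi.add_apply, Pi.zero_apply, add_zero] at hlim
  refine tendsto_sub_nhds_zero_iff.1 (hlim.congr fun k => ?_)
  rw [hT.kernelOp_sub_self_add_eq (hTm _) hXmeas hC₀.le hν.1 (ht0 _) hx hf₁ hf₂ (hb _).1
    (hf₂.indicator measurableSet_closedBall)]
  rfl
end
end
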